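/- arXiv:1803.00281 — 6 statements merged into one kernel-verified Lean document; each statement's English description precedes it below -/
import Mathlib

section
/- Let D be the symmetric digraph obtained from the join K_k ∨ \overline{K}_{n−k} (n ≥ 3k) by replacing each edge by two opposite arcs. Then κ_k(D) = κ(D) = k. -/
/-!
Removing the `k` vertices of `K_k` leaves an edgeless digraph, while any set of fewer than `k`
vertices misses a vertex of `K_k`, through which everything else still passes both ways; so
`κ(D) = k`. For `κ_k(D)`: a `k`-set `S` of independent vertices needs a vertex of `K_k` in every
strong subgraph containing it, and these vertices must differ, so `κ_S(D) ≤ k`. Conversely, for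
any `k`-set `S`, pair the `i`-th vertex `c_i` of `K_k` with an independent vertex `y_i ∉ S`
(there are `n - 2k ≥ k` of them) and take the double star joining `c_i` to `y_i` and to the
independent vertices of `S`, and `y_i` to the vertices of `S` in `K_k`: these `k` strong
subgraphs are internally disjoint.
-/

/-- A digraph on vertex type `V`: a loopless binary arc relation. -/
structure Dgraph (V : Type) where
  Arc : V → V → Prop
  loopless : ∀ v, ¬ Arc v v

namespace Dgraph

variable {V : Type}

/-- A digraph is strong (strongly connected) if every vertex reaches every vertex. -/
def IsStrong (D : Dgraph V) : Prop := ∀ u v : V, Relation.ReflTransGen D.Arc u v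

/-- A strong subgraph of `D`: a vertex set together with an arc relation contained
in `D`'s arcs, whose arcs stay inside the vertex set, and which is strongly
connected on its vertex set. -/
structure StrongSub (D : Dgraph V) where
  verts : Set V
  Arc : V → V → Prop
  arc_sub : ∀ u v, Arc u v → D.Arc u v
  arc_mem : ∀ u v, Arc u v → u ∈ verts ∧ v ∈ verts
  strong : ∀ u ∈ verts, ∀ v ∈ verts, Relation.ReflTransGen Arc u v

/-- `κ_S(D)`: the maximum number of pairwise internally disjoint strong subgraphs
of `D` containing `S` (they share exactly the vertices of `S` and no arcs). -/
noncomputable def kappaS (D : Dgraph V) (S : Set V) : ℕ :=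
  sSup {p : ℕ | ∃ f : Fin p → StrongSub D,
    (∀ i, S ⊆ (f i).verts) ∧
    (∀ i j, i ≠ j → (f i).verts ∩ (f j).verts = S) ∧
    (∀ i j, i ≠ j → ∀ u v, ¬ ((f i).Arc u v ∧ (f j).Arc u v))}

/-- The strong subgraph `k`-connectivity `κ_k(D)`. -/
noncomputable def kappa [Fintype V] (D : Dgraph V) (k : ℕ) : ℕ :=
  sInf {m : ℕ | ∃ S : Finset V, S.card = k ∧ kappaS D ↑S = m}

/-- The number of arcs of a digraph. -/
noncomputable def arcCount (D : Dgraph V) : ℕ :=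
  Nat.card {p : V × V // D.Arc p.1 p.2}

/-- Delete the arc `e` from `D`. -/
def deleteArc (D : Dgraph V) (e : V × V) : Dgraph V where
  Arc u v := D.Arc u v ∧ (u, v) ≠ e
  loopless v h := D.loopless v h.1

/-- `D` is minimally strong subgraph `(k,ℓ)`-connected. -/
noncomputable def MinSSC [Fintype V] (D : Dgraph V) (k ℓ : ℕ) : Prop :=
  ℓ ≤ kappa D k ∧ ∀ e : V × V, D.Arc e.1 e.2 → kappa (deleteArc D e) k ≤ ℓ - 1

/-- Minimum out-degree `δ⁺(D)`. -/
noncomputable def minOutDeg [Fintype V] (D : Dgraph V) : ℕ :=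
  sInf (Set.range fun v => Nat.card {w : V // D.Arc v w})

/-- Minimum in-degree `δ⁻(D)`. -/
noncomputable def minInDeg [Fintype V] (D : Dgraph V) : ℕ :=
  sInf (Set.range fun v => Nat.card {w : V // D.Arc w v})

/-- The subdigraph of `D` induced on a vertex set `W`. -/
def induce (D : Dgraph V) (W : Set V) : Dgraph W where
  Arc u v := D.Arc u v
  loopless v h := D.loopless v h

/-- The strong vertex-connectivity `κ(D)`: the minimum number of vertices whose
removal leaves a non-strong digraph, or `n - 1` if there is no such set. -/
noncomputable def vertConn [Fintype V] (D : Dgraph V) : ℕ :=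
  sInf ({Fintype.card V - 1} ∪
    {m : ℕ | ∃ Q : Finset V, Q.card = m ∧ ¬ IsStrong (D.induce (↑Q : Set V)ᶜ)})

/-- `D` is symmetric if the reverse of every arc is an arc. -/
def IsSymmetric (D : Dgraph V) : Prop := ∀ u v, D.Arc u v → D.Arc v u

/-- The underlying undirected (simple) graph of a digraph. -/
def underlying (D : Dgraph V) : SimpleGraph V where
  Adj u v := D.Arc u v ∨ D.Arc v u
  symm := ⟨by intro u v h; tauto⟩
  loopless := ⟨by intro v h; rcases h with h | h <;> exact D.loopless v h⟩

/-- The minimum number of arcs of a minimally strong subgraph `(k,ℓ)`-connected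
digraph on `n` vertices. -/
noncomputable def fMin (n k ℓ : ℕ) : ℕ :=
  sInf {m : ℕ | ∃ D : Dgraph (Fin n), MinSSC D k ℓ ∧ arcCount D = m}

/-- The maximum number of arcs of a minimally strong subgraph `(k,ℓ)`-connected
digraph on `n` vertices. -/
noncomputable def FMax (n k ℓ : ℕ) : ℕ :=
  sSup {m : ℕ | ∃ D : Dgraph (Fin n), MinSSC D k ℓ ∧ arcCount D = m}

end Dgraph

theorem Relation.ReflTransGen.exists_rel_of_ne {α : Type*} {r : α → α → Prop} {u v : α}
    (h : Relation.ReflTransGen r u v) (huv : u ≠ v) : ∃ w, r u w := by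
  rcases h.cases_head with h | ⟨w, hw, -⟩
  exacts [absurd h huv, ⟨w, hw⟩]

namespace Dgraph

variable {V : Type} {D : Dgraph V}

namespace StrongSub

def ofSymmGen (hD : D.IsSymmetric) (W : Set V) (E : V → V → Prop) (r : V)
    (hE : ∀ u v, E u v → D.Arc u v) (hEW : ∀ u v, E u v → u ∈ W ∧ v ∈ W)
    (hr : ∀ w ∈ W, Relation.ReflTransGen E r w) : StrongSub D where
  verts := W
  Arc := Relation.SymmGen E
  arc_sub := by
    rintro u v (h | h)
    exacts [hE u v h, hD v u (hE v u h)]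
  arc_mem := by
    rintro u v (h | h)
    exacts [hEW u v h, (hEW v u h).symm]
  strong u hu v hv := by
    have hr' : ∀ w ∈ W, Relation.ReflTransGen (Relation.SymmGen E) r w := fun w hw =>
      Relation.ReflTransGen.mono (fun _ _ => Relation.SymmGen.of_rel) _ _ (hr w hw)
    exact (symm (hr' u hu)).trans (hr' v hv)

end StrongSub

def IsInternallyDisjoint (S : Set V) {p : ℕ} (f : Fin p → StrongSub D) : Prop :=
  (∀ i, S ⊆ (f i).verts) ∧
    (∀ i j, i ≠ j → (f i).verts ∩ (f j).verts = S) ∧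
    (∀ i j, i ≠ j → ∀ u v, ¬ ((f i).Arc u v ∧ (f j).Arc u v))

theorem IsInternallyDisjoint.le_card [Fintype V] {S : Set V} (hS : S.Nontrivial) {p : ℕ}
    {f : Fin p → StrongSub D} (hf : IsInternallyDisjoint S f) : p ≤ Fintype.card V := by
  obtain ⟨hsub, -, hdisj⟩ := hf
  obtain ⟨u, hu, v, hv, huv⟩ := hS
  choose w hw using fun i => ((f i).strong u (hsub i hu) v (hsub i hv)).exists_rel_of_ne huv
  have hinj : Function.Injective w := by
    intro i j hij
    by_contra hne
    exact hdisj i j hne u (w i) ⟨hw i, hij ▸ hw j⟩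
  simpa using Fintype.card_le_of_injective _ hinj

theorem IsInternallyDisjoint.le_kappaS [Finite V] {S : Set V} (hS : S.Nontrivial) {p : ℕ}
    {f : Fin p → StrongSub D} (hf : IsInternallyDisjoint S f) : p ≤ D.kappaS S := by
  have := Fintype.ofFinite V
  refine le_csSup ⟨Fintype.card V, ?_⟩ ⟨f, hf⟩
  rintro q ⟨g, hg⟩
  exact IsInternallyDisjoint.le_card hS (f := g) hg

/-- Members of a family meet `H` in distinct vertices, since they share only `S`. -/
theorem kappaS_le_card {S : Set V} (H : Finset V) (hHS : Disjoint (H : Set V) S)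
    (hmeet : ∀ G : StrongSub D, S ⊆ G.verts → ∃ w ∈ H, w ∈ G.verts) :
    D.kappaS S ≤ H.card := by
  refine csSup_le ⟨0, Fin.elim0, fun i => i.elim0, fun i => i.elim0, fun i => i.elim0⟩ ?_
  rintro p ⟨f, hsub, hinter, -⟩
  choose w hwH hwf using fun i => hmeet (f i) (hsub i)
  have hinj : Function.Injective w := by
    intro i j hij
    by_contra hne
    have hwS : w i ∈ S := hinter i j hne ▸ ⟨hwf i, hij ▸ hwf j⟩
    exact Set.disjoint_left.mp hHS (hwH i) hwS
  simpa using Fintype.card_le_of_injective (fun i => (⟨w i, hwH i⟩ : H)) fun i j hij =>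
    hinj (congrArg Subtype.val hij)

theorem kappa_le_kappaS [Fintype V] {k : ℕ} (S : Finset V) (hS : S.card = k) :
    D.kappa k ≤ D.kappaS S :=
  Nat.sInf_le ⟨S, hS, rfl⟩

theorem le_kappa [Fintype V] {k m : ℕ} (hk : k ≤ Fintype.card V)
    (h : ∀ S : Finset V, S.card = k → m ≤ D.kappaS S) : m ≤ D.kappa k := by
  obtain ⟨S, -, hS⟩ := Finset.exists_subset_card_eq (s := Finset.univ) (by simpa using hk)
  refine le_csInf ⟨_, S, hS, rfl⟩ ?_
  rintro _ ⟨T, hT, rfl⟩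
  exact h T hT

theorem vertConn_le_card [Fintype V] (Q : Finset V) (hQ : ¬ (D.induce (Q : Set V)ᶜ).IsStrong) :
    D.vertConn ≤ Q.card :=
  Nat.sInf_le (Or.inr ⟨Q, rfl, hQ⟩)

theorem le_vertConn [Fintype V] {m : ℕ} (hm : m ≤ Fintype.card V - 1)
    (h : ∀ Q : Finset V, Q.card < m → (D.induce (Q : Set V)ᶜ).IsStrong) : m ≤ D.vertConn := by
  refine le_csInf ⟨_, Or.inl rfl⟩ ?_
  rintro _ (rfl | ⟨Q, rfl, hQ⟩)
  · exact hm
  · by_contra hlt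
    exact hQ (h Q (not_le.mp hlt))

theorem isStrong_of_forall_arc (c : V) (hc : ∀ v, v ≠ c → D.Arc v c ∧ D.Arc c v) :
    D.IsStrong := by
  have hto : ∀ v, Relation.ReflTransGen D.Arc v c := fun v => by
    by_cases hv : v = c
    · rw [hv]
    · exact .single (hc v hv).1
  have hfrom : ∀ v, Relation.ReflTransGen D.Arc c v := fun v => by
    by_cases hv : v = c
    · rw [hv]
    · exact .single (hc v hv).2
  exact fun u v => (hto u).trans (hfrom v)

/-- `↔(K_k ∨ \overline{K}_{n-k})`, the vertices of `K_k` being `0, …, k - 1`. -/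
def joinCompleteEmpty (n k : ℕ) : Dgraph (Fin n) :=
  ⟨fun u v => u ≠ v ∧ ((u : ℕ) < k ∨ (v : ℕ) < k), fun _ h => h.1 rfl⟩

def completePart (n k : ℕ) : Finset (Fin n) := {v | (v : ℕ) < k}

variable {n k : ℕ}

theorem mem_completePart {v : Fin n} : v ∈ completePart n k ↔ (v : ℕ) < k := by
  simp [completePart]

theorem card_completePart (hkn : k ≤ n) : (completePart n k).card = k := by
  simp [completePart, Fin.card_filter_val_lt, hkn]

theorem card_compl_completePart (hkn : k ≤ n) : (completePart n k)ᶜ.card = n - k := by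
  rw [Finset.card_compl, Fintype.card_fin, card_completePart hkn]

theorem joinCompleteEmpty_isSymmetric : (joinCompleteEmpty n k).IsSymmetric :=
  fun _ _ ⟨hne, h⟩ => ⟨hne.symm, h.symm⟩

theorem joinCompleteEmpty_arc_of_val_lt {u v : Fin n} (huv : (u : ℕ) ≠ v)
    (h : (u : ℕ) < k ∨ (v : ℕ) < k) : (joinCompleteEmpty n k).Arc u v :=
  ⟨Fin.ne_of_val_ne huv, h⟩

theorem vertConn_joinCompleteEmpty (hkn : k + 2 ≤ n) :
    (joinCompleteEmpty n k).vertConn = k := by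
  refine le_antisymm ((vertConn_le_card (completePart n k) ?_).trans_eq (card_completePart (by omega)))
    (le_vertConn (by simp; omega) ?_)
  · intro hstrong
    have hu : (⟨k, by omega⟩ : Fin n) ∈ (↑(completePart n k) : Set (Fin n))ᶜ := by simp [mem_completePart]
    have hv : (⟨k + 1, by omega⟩ : Fin n) ∈ (↑(completePart n k) : Set (Fin n))ᶜ := by simp [mem_completePart]
    obtain ⟨w, hw⟩ := (hstrong ⟨_, hu⟩ ⟨_, hv⟩).exists_rel_of_ne (by simp)
    have hwk : ¬ ((w : Fin n) : ℕ) < k := fun h => w.2 (mem_completePart.mpr h)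
    exact hw.2.elim (lt_irrefl k) hwk
  · intro Q hQ
    obtain ⟨c, hc, hcQ⟩ :=
      Finset.exists_mem_notMem_of_card_lt_card (hQ.trans_eq (card_completePart (by omega)).symm)
    refine isStrong_of_forall_arc ⟨c, by simpa using hcQ⟩ fun v hv => ?_
    have hv' : (v : Fin n) ≠ c := fun h => hv (Subtype.ext h)
    exact ⟨⟨hv', .inr (mem_completePart.mp hc)⟩, ⟨hv'.symm, .inl (mem_completePart.mp hc)⟩⟩

theorem kappaS_joinCompleteEmpty_le (hk : 2 ≤ k) {S : Finset (Fin n)} (hS : S ⊆ (completePart n k)ᶜ)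
    (hSk : S.card = k) : (joinCompleteEmpty n k).kappaS S ≤ k := by
  have hkn : k ≤ n := by simpa [hSk] using S.card_le_univ
  refine (kappaS_le_card (completePart n k) ?_ fun G hG => ?_).trans_eq (card_completePart hkn)
  · exact Finset.disjoint_coe.mpr (Finset.disjoint_of_subset_right hS disjoint_compl_right)
  obtain ⟨u, hu, v, hv, huv⟩ := Finset.one_lt_card.mp (by omega : 1 < S.card)
  obtain ⟨w, hw⟩ := (G.strong u (hG hu) v (hG hv)).exists_rel_of_ne huv
  have huk : ¬ (u : ℕ) < k := by simpa [mem_completePart] using hS hu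
  exact ⟨w, mem_completePart.mpr ((G.arc_sub u w hw).2.resolve_left huk), (G.arc_mem u w hw).2⟩

def doubleStarEdge (k : ℕ) (S : Finset (Fin n)) (c y a b : Fin n) : Prop :=
  a = c ∧ (b = y ∨ b ∈ S ∧ k ≤ (b : ℕ)) ∨ a = y ∧ b ∈ S ∧ (b : ℕ) < k

def doubleStar (S : Finset (Fin n)) {c y : Fin n} (hc : (c : ℕ) < k) (hy : k ≤ (y : ℕ)) :
    StrongSub (joinCompleteEmpty n k) :=
  StrongSub.ofSymmGen joinCompleteEmpty_isSymmetric (↑S ∪ {c, y}) (doubleStarEdge k S c y) c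
    (by
      rintro a b (⟨rfl, rfl | ⟨-, hb⟩⟩ | ⟨rfl, -, hb⟩)
      · exact joinCompleteEmpty_arc_of_val_lt (by omega) (.inl hc)
      · exact joinCompleteEmpty_arc_of_val_lt (by omega) (.inl hc)
      · exact joinCompleteEmpty_arc_of_val_lt (by omega) (.inr hb))
    (by
      rintro a b (⟨rfl, rfl | ⟨hb, -⟩⟩ | ⟨rfl, hb, -⟩)
      exacts [by simp, by simp [hb], by simp [hb]])
    (by
      rintro w (hw | rfl | rfl)
      · by_cases hwk : (w : ℕ) < k
        · exact .head (.inl ⟨rfl, .inl rfl⟩) (.single (.inr ⟨rfl, hw, hwk⟩))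
        · exact .single (.inl ⟨rfl, .inr ⟨hw, not_lt.mp hwk⟩⟩)
      · rfl
      · exact .single (.inl ⟨rfl, .inl rfl⟩))

/-- An arc of the star at `(c, y)` has an end in `{c, y}`; the only such end on an arc of the
star at `(c', y')` is `c ∈ S`, joined there to `y'`, which the first star avoids. -/
theorem doubleStar_arc_disjoint {S : Finset (Fin n)} {c c' y y' : Fin n} (hc : (c : ℕ) < k)
    (hc' : (c' : ℕ) < k) (hy : k ≤ (y : ℕ)) (hy' : k ≤ (y' : ℕ)) (hcc' : c ≠ c') (hyy' : y ≠ y')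
    (hyS : y ∉ S) (hy'S : y' ∉ S) (a b : Fin n) :
    ¬ ((doubleStar S hc hy).Arc a b ∧ (doubleStar S hc' hy').Arc a b) := by
  simp only [doubleStar, StrongSub.ofSymmGen, Relation.SymmGen, doubleStarEdge, Fin.ext_iff] at *
  grind

theorem le_kappaS_joinCompleteEmpty (hk : 2 ≤ k) (hn : 3 * k ≤ n) {S : Finset (Fin n)}
    (hSk : S.card = k) : k ≤ (joinCompleteEmpty n k).kappaS S := by
  have hkn : k ≤ n := by omega
  have hT : Fintype.card (Fin k) ≤ Fintype.card ((completePart n k)ᶜ \ S : Finset (Fin n)) := by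
    have := Finset.le_card_sdiff S (completePart n k)ᶜ
    rw [card_compl_completePart hkn] at this
    simp only [Fintype.card_fin, Fintype.card_coe]
    omega
  obtain ⟨y⟩ := Function.Embedding.nonempty_of_card_le hT
  have hyk : ∀ i, k ≤ ((y i : Fin n) : ℕ) := fun i => by
    simpa [mem_completePart] using (Finset.mem_sdiff.mp (y i).2).1
  have hyS : ∀ i, (y i : Fin n) ∉ S := fun i => (Finset.mem_sdiff.mp (y i).2).2
  have hyinj : ∀ i j, i ≠ j → (y i : Fin n) ≠ y j := fun i j hij h =>
    hij (y.injective (Subtype.ext h))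
  have hcinj : ∀ i j : Fin k, i ≠ j → Fin.castLE hkn i ≠ Fin.castLE hkn j := fun i j hij h =>
    hij (Fin.castLE_injective hkn h)
  refine IsInternallyDisjoint.le_kappaS (S.one_lt_card_iff_nontrivial.mp (by omega))
    (f := fun i => doubleStar S (c := Fin.castLE hkn i) i.2 (hyk i))
    ⟨fun i => ?_, fun i j hij => ?_, fun i j hij =>
      doubleStar_arc_disjoint _ _ _ _ (hcinj i j hij) (hyinj i j hij) (hyS i) (hyS j)⟩
  · exact Set.subset_union_left
  · show (↑S ∪ {_, _}) ∩ (↑S ∪ {_, _}) = (S : Set (Fin n))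
    rw [← Set.union_inter_distrib_left, Set.union_eq_left]
    rintro x ⟨hx, hx'⟩
    have := hyk i
    have := hyk j
    have := hcinj i j hij
    have := hyinj i j hij
    simp only [Set.mem_insert_iff, Set.mem_singleton_iff, Fin.ext_iff, Fin.val_castLE] at *
    omega

theorem kappa_joinCompleteEmpty (hk : 2 ≤ k) (hn : 3 * k ≤ n) :
    (joinCompleteEmpty n k).kappa k = k := by
  have hkn : k ≤ n := by omega
  obtain ⟨S, hS, hSk⟩ := Finset.exists_subset_card_eq (s := (completePart n k)ᶜ) (n := k)
    (by rw [card_compl_completePart hkn]; omega)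
  refine le_antisymm ((kappa_le_kappaS S hSk).trans (kappaS_joinCompleteEmpty_le hk hS hSk)) ?_
  exact le_kappa (by simpa using hkn) fun T hT => le_kappaS_joinCompleteEmpty hk hn hT

end Dgraph

/-- For the symmetric digraph of the join `K_k ∨ \bar{K}_{n-k}` (`n ≥ 3k`),
`κ_k(D) = κ(D) = k`. Vertices `0, …, k-1` form the complete part. -/
theorem stmt3 (n k : ℕ) (hk : 2 ≤ k) (hn : 3 * k ≤ n) :
    let D : Dgraph (Fin n) :=
      ⟨fun u v => u ≠ v ∧ ((u : ℕ) < k ∨ (v : ℕ) < k), fun v h => h.1 rfl⟩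
    D.kappa k = D.vertConn ∧ D.vertConn = k := by
  have hconn : (Dgraph.joinCompleteEmpty n k).vertConn = k :=
    Dgraph.vertConn_joinCompleteEmpty (by omega)
  exact ⟨(Dgraph.kappa_joinCompleteEmpty hk hn).trans hconn.symm, hconn⟩
end

section
/- A digraph D is minimally strong subgraph (k,1)-connected if and only if D is a minimally strong digraph (i.e., D is strong but D−e is not strong for every arc e). -/
/-! For `2 ≤ k ≤ n`, `κ_k(D) ≥ 1` holds exactly when `D` is strong: a strong subgraph containing
a `k`-set `S` connects the points of `S`, every pair of vertices lies in some `k`-set, and a strong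
`D` is itself a strong subgraph containing every `S`. Applying this to `D` and to each `D - e`
turns minimal strong subgraph `(k,1)`-connectivity into minimal strong connectivity. -/

namespace Dgraph

variable {V : Type}

theorem StrongSub.reflTransGen {D : Dgraph V} (H : StrongSub D) {u v : V}
    (hu : u ∈ H.verts) (hv : v ∈ H.verts) : Relation.ReflTransGen D.Arc u v :=
  Relation.ReflTransGen.mono H.arc_sub u v (H.strong u hu v hv)

theorem StrongSub.exists_arc {D : Dgraph V} (H : StrongSub D) {a b : V}
    (ha : a ∈ H.verts) (hb : b ∈ H.verts) (hab : a ≠ b) : ∃ u v, H.Arc u v := by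
  rcases (H.strong a ha b hb).cases_head with h | ⟨c, hc, -⟩
  · exact absurd h hab
  · exact ⟨a, c, hc⟩

def StrongSub.ofIsStrong {D : Dgraph V} (hD : D.IsStrong) : StrongSub D where
  verts := Set.univ
  Arc := D.Arc
  arc_sub _ _ h := h
  arc_mem _ _ _ := ⟨trivial, trivial⟩
  strong u _ v _ := hD u v

theorem exists_strongSub_of_pos_kappaS {D : Dgraph V} {S : Set V} (h : 0 < kappaS D S) :
    ∃ H : StrongSub D, S ⊆ H.verts := by
  obtain ⟨p, ⟨f, hS, -⟩, hp⟩ := exists_lt_of_lt_csSup' h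
  exact ⟨f ⟨0, hp⟩, hS _⟩

/- Each member of an admissible family contains `a ≠ b`, hence owns an arc, and the members are
arc-disjoint; so the family is no larger than `V × V`. Without two points in `S` the set can be
unbounded, and then `sSup` is the junk value `0`. -/
theorem bddAbove_kappaS_set [Finite V] (D : Dgraph V) {S : Set V} {a b : V}
    (ha : a ∈ S) (hb : b ∈ S) (hab : a ≠ b) :
    BddAbove {p : ℕ | ∃ f : Fin p → StrongSub D,
      (∀ i, S ⊆ (f i).verts) ∧
      (∀ i j, i ≠ j → (f i).verts ∩ (f j).verts = S) ∧
      (∀ i j, i ≠ j → ∀ u v, ¬ ((f i).Arc u v ∧ (f j).Arc u v))} := by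
  refine ⟨Nat.card (V × V), ?_⟩
  rintro p ⟨f, hS, -, hdisj⟩
  have hArc (i : Fin p) : ∃ e : V × V, (f i).Arc e.1 e.2 := by
    obtain ⟨u, v, huv⟩ := (f i).exists_arc (hS i ha) (hS i hb) hab
    exact ⟨(u, v), huv⟩
  choose g hg using hArc
  have hg_inj : Function.Injective g := fun i j hij => by
    by_contra hne
    exact hdisj i j hne _ _ ⟨hg i, hij ▸ hg j⟩
  simpa using Nat.card_le_card_of_injective g hg_inj

theorem one_le_kappaS [Finite V] {D : Dgraph V} {S : Set V} (H : StrongSub D)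
    (hH : S ⊆ H.verts) {a b : V} (ha : a ∈ S) (hb : b ∈ S) (hab : a ≠ b) :
    1 ≤ kappaS D S := by
  refine le_csSup (bddAbove_kappaS_set D ha hb hab) ⟨fun _ => H, fun _ => hH, ?_, ?_⟩ <;>
    exact fun i j hij => absurd (Subsingleton.elim i j) hij

theorem exists_finset_card_eq_mem_of_ne [Fintype V] {k : ℕ} (hk2 : 2 ≤ k) (hkn : k ≤ Fintype.card V)
    {u v : V} (huv : u ≠ v) : ∃ S : Finset V, S.card = k ∧ u ∈ S ∧ v ∈ S := by
  classical
  obtain ⟨S, hsub, -, hcard⟩ := Finset.exists_subsuperset_card_eq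
    (Finset.subset_univ {u, v}) ((Finset.card_pair huv).trans_le hk2) (by simpa using hkn)
  exact ⟨S, hcard, hsub (by simp), hsub (by simp)⟩

theorem one_le_kappa_iff_isStrong [Fintype V] {D : Dgraph V} {k : ℕ} (hk2 : 2 ≤ k)
    (hkn : k ≤ Fintype.card V) : 1 ≤ D.kappa k ↔ D.IsStrong := by
  constructor
  · intro h u v
    by_cases huv : u = v
    · exact huv ▸ Relation.ReflTransGen.refl
    obtain ⟨S, hcard, hu, hv⟩ := exists_finset_card_eq_mem_of_ne hk2 hkn huv
    have hS : 0 < kappaS D S := h.trans (Nat.sInf_le ⟨S, hcard, rfl⟩)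
    obtain ⟨H, hH⟩ := exists_strongSub_of_pos_kappaS hS
    exact H.reflTransGen (hH hu) (hH hv)
  · intro hD
    obtain ⟨S₀, -, hS₀⟩ := Finset.exists_subset_card_eq (s := Finset.univ) (by simpa using hkn)
    refine le_csInf ⟨_, S₀, hS₀, rfl⟩ ?_
    rintro _ ⟨S, hcard, rfl⟩
    obtain ⟨a, ha, b, hb, hab⟩ := Finset.one_lt_card.mp (by omega : 1 < S.card)
    exact one_le_kappaS (.ofIsStrong hD) (Set.subset_univ _) ha hb hab

end Dgraph

/-- `D` is minimally strong subgraph `(k,1)`-connected iff `D` is a minimally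
strong digraph: `D` is strong but `D - e` is not strong for every arc `e`. -/
theorem stmt7 {V : Type} [Fintype V] (D : Dgraph V) (k : ℕ)
    (hk2 : 2 ≤ k) (hkn : k ≤ Fintype.card V) :
    D.MinSSC k 1 ↔
      (D.IsStrong ∧ ∀ e : V × V, D.Arc e.1 e.2 → ¬ (D.deleteArc e).IsStrong) := by
  have hkappa_le_zero (D' : Dgraph V) : D'.kappa k ≤ 1 - 1 ↔ ¬ D'.IsStrong := by
    rw [← Dgraph.one_le_kappa_iff_isStrong hk2 hkn]
    omega
  simp only [Dgraph.MinSSC, Dgraph.one_le_kappa_iff_isStrong hk2 hkn, hkappa_le_zero]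
end

section
/- Let n ≥ 4 and let D be obtained from the complete digraph ↔K_n by deleting the three arcs of a directed 3-cycle u₁u₂u₃u₁. Then κ_2(D) = n−2. -/
namespace Dgraph

open Relation

variable {V : Type}

def IsInternallyDisjointFamily {ι : Type} (D : Dgraph V) (S : Set V) (f : ι → D.StrongSub) : Prop :=
  (∀ i, S ⊆ (f i).verts) ∧
    (∀ i j, i ≠ j → (f i).verts ∩ (f j).verts = S) ∧
    (∀ i j, i ≠ j → ∀ u v, ¬ ((f i).Arc u v ∧ (f j).Arc u v))

theorem kappaS_eq_sSup (D : Dgraph V) (S : Set V) :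
    D.kappaS S = sSup {p | ∃ f : Fin p → D.StrongSub, D.IsInternallyDisjointFamily S f} :=
  rfl

theorem IsInternallyDisjointFamily.comp_injective {ι κ : Type} {D : Dgraph V} {S : Set V}
    {f : ι → D.StrongSub} (hf : D.IsInternallyDisjointFamily S f) {e : κ → ι} (he : e.Injective) :
    D.IsInternallyDisjointFamily S (f ∘ e) :=
  ⟨fun i => hf.1 (e i), fun _ _ hij => hf.2.1 _ _ (he.ne hij),
    fun _ _ hij => hf.2.2 _ _ (he.ne hij)⟩

theorem StrongSub.exists_arc_of_mem {D : Dgraph V} (H : D.StrongSub) {x y : V}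
    (hx : x ∈ H.verts) (hy : y ∈ H.verts) (hxy : x ≠ y) : ∃ c, H.Arc x c := by
  obtain ⟨c, hc, -⟩ := (H.strong x hx y hy).cases_head.resolve_left hxy
  exact ⟨c, hc⟩

theorem IsInternallyDisjointFamily.card_le_outDeg [Finite V] {ι : Type} {D : Dgraph V} {x y : V}
    (hxy : x ≠ y) {f : ι → D.StrongSub} (hf : D.IsInternallyDisjointFamily {x, y} f) :
    Nat.card ι ≤ Nat.card {c // D.Arc x c} := by
  choose c hc using fun i => (f i).exists_arc_of_mem (hf.1 i (by simp)) (hf.1 i (by simp)) hxy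
  refine Nat.card_le_card_of_injective (fun i => ⟨c i, (f i).arc_sub _ _ (hc i)⟩) ?_
  intro i j hij
  by_contra hne
  have hcij : c i = c j := congrArg Subtype.val hij
  exact hf.2.2 i j hne x (c i) ⟨hc i, hcij ▸ hc j⟩

theorem kappaS_pair_le_outDeg [Finite V] (D : Dgraph V) {x y : V} (hxy : x ≠ y) :
    D.kappaS {x, y} ≤ Nat.card {c // D.Arc x c} :=
  by
  rw [kappaS_eq_sSup]
  exact csSup_le' fun _ ⟨_, hf⟩ => by simpa using hf.card_le_outDeg hxy

theorem IsInternallyDisjointFamily.card_le_kappaS [Finite V] {ι : Type} [Finite ι] {D : Dgraph V}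
    {x y : V} (hxy : x ≠ y) {f : ι → D.StrongSub} (hf : D.IsInternallyDisjointFamily {x, y} f) :
    Nat.card ι ≤ D.kappaS {x, y} := by
  rw [kappaS_eq_sSup]
  exact le_csSup ⟨_, fun _ ⟨_, hg⟩ => by simpa using hg.card_le_outDeg hxy⟩
    ⟨f ∘ (Finite.equivFin ι).symm, hf.comp_injective (Equiv.injective _)⟩

theorem kappa_two_eq_of_le_kappaS [Fintype V] (D : Dgraph V) {m : ℕ}
    (hge : ∀ x y : V, x ≠ y → m ≤ D.kappaS {x, y}) {x y : V} (hxy : x ≠ y)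
    (hle : D.kappaS {x, y} ≤ m) : D.kappa 2 = m := by
  classical
  have hmem : D.kappaS {x, y} ∈ {m | ∃ S : Finset V, S.card = 2 ∧ D.kappaS ↑S = m} :=
    ⟨{x, y}, Finset.card_pair hxy, by rw [Finset.coe_pair]⟩
  refine le_antisymm ((Nat.sInf_le hmem).trans hle) (le_csInf ⟨_, hmem⟩ ?_)
  rintro _ ⟨S, hS, rfl⟩
  obtain ⟨a, b, hab, rfl⟩ := Finset.card_eq_two.mp hS
  rw [Finset.coe_pair]
  exact hge a b hab

theorem natCard_compl_pair [Finite V] {x y : V} (hxy : x ≠ y) :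
    Nat.card ↥({x, y} : Set V)ᶜ = Nat.card V - 2 := by
  rw [Nat.card_coe_set_eq, Set.ncard_compl, Set.ncard_pair hxy]

def IsTriangleArc (u1 u2 u3 a b : V) : Prop :=
  (a, b) = (u1, u2) ∨ (a, b) = (u2, u3) ∨ (a, b) = (u3, u1)

namespace IsTriangleArc

variable {u1 u2 u3 a b c d : V}

theorem right_unique (h12 : u1 ≠ u2) (h13 : u1 ≠ u3) (h23 : u2 ≠ u3)
    (hab : IsTriangleArc u1 u2 u3 a b) (hac : IsTriangleArc u1 u2 u3 a c) : b = c := by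
  simp only [IsTriangleArc, Prod.mk.injEq] at hab hac
  grind

theorem left_unique (h12 : u1 ≠ u2) (h13 : u1 ≠ u3) (h23 : u2 ≠ u3)
    (hba : IsTriangleArc u1 u2 u3 b a) (hca : IsTriangleArc u1 u2 u3 c a) : b = c := by
  simp only [IsTriangleArc, Prod.mk.injEq] at hba hca
  grind

theorem head_eq_tail (hab : IsTriangleArc u1 u2 u3 a b) (hcd : IsTriangleArc u1 u2 u3 c d)
    (had : a ≠ d) (hca : c ≠ a) : b = c := by
  simp only [IsTriangleArc, Prod.mk.injEq] at hab hcd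
  grind

end IsTriangleArc

def completeMinusTriangle (u1 u2 u3 : V) : Dgraph V :=
  ⟨fun a b => a ≠ b ∧ ¬ IsTriangleArc u1 u2 u3 a b, fun _ h => h.1 rfl⟩

section CompleteMinusTriangle

variable {u1 u2 u3 : V}

theorem natCard_outArc_completeMinusTriangle [Finite V] (h12 : u1 ≠ u2) (h13 : u1 ≠ u3) :
    Nat.card {c // (completeMinusTriangle u1 u2 u3).Arc u1 c} = Nat.card V - 2 := by
  rw [← natCard_compl_pair h12]
  refine Nat.card_congr (Equiv.subtypeEquivRight fun c => ?_)
  simp only [completeMinusTriangle, IsTriangleArc, Prod.mk.injEq, Set.mem_compl_iff,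
    Set.mem_insert_iff, Set.mem_singleton_iff]
  grind

theorem eq_of_not_path (h12 : u1 ≠ u2) (h13 : u1 ≠ u3) (h23 : u2 ≠ u3) {x y w w' : V}
    (hxy : x ≠ y) (hwx : w ≠ x) (hwy : w ≠ y) (hw'x : w' ≠ x) (hw'y : w' ≠ y)
    (hw : ¬ ((completeMinusTriangle u1 u2 u3).Arc x w ∧ (completeMinusTriangle u1 u2 u3).Arc w y))
    (hw' : ¬ ((completeMinusTriangle u1 u2 u3).Arc x w' ∧
      (completeMinusTriangle u1 u2 u3).Arc w' y)) : w = w' := by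
  simp only [completeMinusTriangle, ne_eq, hwx.symm, hwy, hw'x.symm, hw'y, not_false_eq_true,
    true_and, not_and_or, not_not] at hw hw'
  rcases hw with hw | hw <;> rcases hw' with hw' | hw'
  · exact hw.right_unique h12 h13 h23 hw'
  · exact hw.head_eq_tail hw' hxy hw'x
  · exact (hw'.head_eq_tail hw hxy hwx).symm
  · exact hw.left_unique h12 h13 h23 hw'

def gadgetArc (D : Dgraph V) (x y w a b : V) : Prop :=
  D.Arc a b ∧
    (a = w ∧ (b = x ∨ b = y) ∨ (a = x ∨ a = y) ∧ b = w ∨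
      a = x ∧ b = y ∧ ¬ (D.Arc x w ∧ D.Arc w y) ∨ a = y ∧ b = x ∧ ¬ (D.Arc y w ∧ D.Arc w x))

theorem gadgetArc_comm (D : Dgraph V) (x y w : V) : D.gadgetArc x y w = D.gadgetArc y x w := by
  ext a b
  unfold gadgetArc
  tauto

theorem reflTransGen_gadgetArc_to_center (h12 : u1 ≠ u2) (h13 : u1 ≠ u3) (h23 : u2 ≠ u3)
    {x y w : V} (hxy : x ≠ y) (hwx : w ≠ x) (hwy : w ≠ y) :
    ReflTransGen ((completeMinusTriangle u1 u2 u3).gadgetArc x y w) x w := by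
  by_cases hxw : (completeMinusTriangle u1 u2 u3).Arc x w
  · exact .single ⟨hxw, by simp⟩
  have hT : IsTriangleArc u1 u2 u3 x w := by
    simpa [completeMinusTriangle, hwx.symm] using hxw
  have hxy' : (completeMinusTriangle u1 u2 u3).Arc x y :=
    ⟨hxy, fun h => hwy (hT.right_unique h12 h13 h23 h)⟩
  have hyw : (completeMinusTriangle u1 u2 u3).Arc y w :=
    ⟨hwy.symm, fun h => hxy (hT.left_unique h12 h13 h23 h)⟩
  exact .head ⟨hxy', by simp [hxw]⟩ (.single ⟨hyw, by simp⟩)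

theorem reflTransGen_gadgetArc_from_center (h12 : u1 ≠ u2) (h13 : u1 ≠ u3) (h23 : u2 ≠ u3)
    {x y w : V} (hxy : x ≠ y) (hwx : w ≠ x) (hwy : w ≠ y) :
    ReflTransGen ((completeMinusTriangle u1 u2 u3).gadgetArc x y w) w x := by
  by_cases hwx' : (completeMinusTriangle u1 u2 u3).Arc w x
  · exact .single ⟨hwx', by simp⟩
  have hT : IsTriangleArc u1 u2 u3 w x := by
    simpa [completeMinusTriangle, hwx] using hwx'
  have hwy' : (completeMinusTriangle u1 u2 u3).Arc w y :=
    ⟨hwy, fun h => hxy (hT.right_unique h12 h13 h23 h)⟩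
  have hyx : (completeMinusTriangle u1 u2 u3).Arc y x :=
    ⟨hxy.symm, fun h => hwy.symm (h.left_unique h12 h13 h23 hT)⟩
  exact .head ⟨hwy', by simp⟩ (.single ⟨hyx, by simp [hwx']⟩)

def gadget (h12 : u1 ≠ u2) (h13 : u1 ≠ u3) (h23 : u2 ≠ u3) {x y w : V} (hxy : x ≠ y)
    (hwx : w ≠ x) (hwy : w ≠ y) : (completeMinusTriangle u1 u2 u3).StrongSub where
  verts := {x, y, w}
  Arc := (completeMinusTriangle u1 u2 u3).gadgetArc x y w
  arc_sub _ _ h := h.1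
  arc_mem _ _ h := by
    rcases h.2 with ⟨rfl, rfl | rfl⟩ | ⟨rfl | rfl, rfl⟩ | ⟨rfl, rfl, -⟩ | ⟨rfl, rfl, -⟩ <;> simp
  strong := by
    have hto : ∀ a ∈ ({x, y, w} : Set V),
        ReflTransGen ((completeMinusTriangle u1 u2 u3).gadgetArc x y w) a w := by
      rintro a (rfl | rfl | rfl)
      · exact reflTransGen_gadgetArc_to_center h12 h13 h23 hxy hwx hwy
      · rw [gadgetArc_comm]
        exact reflTransGen_gadgetArc_to_center h12 h13 h23 hxy.symm hwy hwx
      · exact .refl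
    have hfrom : ∀ b ∈ ({x, y, w} : Set V),
        ReflTransGen ((completeMinusTriangle u1 u2 u3).gadgetArc x y w) w b := by
      rintro b (rfl | rfl | rfl)
      · exact reflTransGen_gadgetArc_from_center h12 h13 h23 hxy hwx hwy
      · rw [gadgetArc_comm]
        exact reflTransGen_gadgetArc_from_center h12 h13 h23 hxy.symm hwy hwx
      · exact .refl
    exact fun a ha b hb => (hto a ha).trans (hfrom b hb)

theorem gadgetArc_disjoint (h12 : u1 ≠ u2) (h13 : u1 ≠ u3) (h23 : u2 ≠ u3) {x y w w' : V}
    (hxy : x ≠ y) (hwx : w ≠ x) (hwy : w ≠ y) (hw'x : w' ≠ x) (hw'y : w' ≠ y) (hww' : w ≠ w')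
    (a b : V) :
    ¬ ((completeMinusTriangle u1 u2 u3).gadgetArc x y w a b ∧
      (completeMinusTriangle u1 u2 u3).gadgetArc x y w' a b) := by
  have hpath := eq_of_not_path h12 h13 h23 hxy hwx hwy hw'x hw'y
  have hpath' := eq_of_not_path h12 h13 h23 hxy.symm hwy hwx hw'y hw'x
  rintro ⟨⟨-, h⟩, ⟨-, h'⟩⟩
  grind

theorem isInternallyDisjointFamily_gadget (h12 : u1 ≠ u2) (h13 : u1 ≠ u3) (h23 : u2 ≠ u3) {x y : V}
    (hxy : x ≠ y) :
    (completeMinusTriangle u1 u2 u3).IsInternallyDisjointFamily {x, y}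
      fun w : ↥({x, y} : Set V)ᶜ =>
        gadget h12 h13 h23 hxy (not_or.mp w.2).1 (not_or.mp w.2).2 := by
  have hw : ∀ w : ↥({x, y} : Set V)ᶜ, w.1 ≠ x ∧ w.1 ≠ y := fun w => not_or.mp w.2
  refine ⟨fun w => by simp [gadget, Set.insert_subset_insert], fun w w' hne => ?_,
    fun w w' hne => gadgetArc_disjoint h12 h13 h23 hxy (hw w).1 (hw w).2 (hw w').1 (hw w').2
      (Subtype.coe_ne_coe.mpr hne)⟩
  have hww' : w.1 ≠ w'.1 := Subtype.coe_ne_coe.mpr hne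
  have hwxy := hw w
  have hw'xy := hw w'
  ext v
  simp only [gadget, Set.mem_inter_iff, Set.mem_insert_iff, Set.mem_singleton_iff]
  grind

theorem natCard_sub_two_le_kappaS_completeMinusTriangle [Finite V] (h12 : u1 ≠ u2)
    (h13 : u1 ≠ u3) (h23 : u2 ≠ u3) {x y : V} (hxy : x ≠ y) :
    Nat.card V - 2 ≤ (completeMinusTriangle u1 u2 u3).kappaS {x, y} :=
  natCard_compl_pair hxy ▸ (isInternallyDisjointFamily_gadget h12 h13 h23 hxy).card_le_kappaS hxy

end CompleteMinusTriangle

end Dgraph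

theorem stmt9_general {V : Type} [Fintype V] (n : ℕ)
    (hn : Fintype.card V = n)
    (u1 u2 u3 : V) (h12 : u1 ≠ u2) (h13 : u1 ≠ u3) (h23 : u2 ≠ u3) :
    let D : Dgraph V :=
      ⟨fun u v => u ≠ v ∧
          ¬ ((u, v) = (u1, u2) ∨ (u, v) = (u2, u3) ∨ (u, v) = (u3, u1)),
        fun v h => h.1 rfl⟩
    D.kappa 2 = n - 2 := by
  intro D
  subst hn
  rw [← Nat.card_eq_fintype_card]
  refine Dgraph.kappa_two_eq_of_le_kappaS (Dgraph.completeMinusTriangle u1 u2 u3)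
    (fun _ _ hxy => Dgraph.natCard_sub_two_le_kappaS_completeMinusTriangle h12 h13 h23 hxy) h12 ?_
  exact (Dgraph.kappaS_pair_le_outDeg _ h12).trans
    (Dgraph.natCard_outArc_completeMinusTriangle h12 h13).le

/-- For `n ≥ 4`, the digraph obtained from the complete digraph on `n` vertices
by deleting the arcs of a directed 3-cycle `u₁u₂u₃u₁` has `κ₂ = n - 2`. -/
theorem stmt9 {V : Type} [Fintype V] (n : ℕ)
    (hn : Fintype.card V = n) (h4 : 4 ≤ n)
    (u1 u2 u3 : V) (h12 : u1 ≠ u2) (h13 : u1 ≠ u3) (h23 : u2 ≠ u3) :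
    let D : Dgraph V :=
      ⟨fun u v => u ≠ v ∧
          ¬ ((u, v) = (u1, u2) ∨ (u, v) = (u2, u3) ∨ (u, v) = (u3, u1)),
        fun v h => h.1 rfl⟩
    D.kappa 2 = n - 2 :=
  stmt9_general n hn u1 u2 u3 h12 h13 h23
end

section
/- For n ∉ {4,6} and 2 ≤ ℓ ≤ n−1, f(n,n,ℓ) = nℓ: the union of ℓ arc-disjoint Hamiltonian cycles from a Hamiltonian decomposition of ↔K_n is a minimally strong subgraph (n,ℓ)-connected digraph with nℓ arcs. -/
/-- A Hamiltonian cycle digraph: strong, and every vertex has out-degree 1. -/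
def Dgraph.IsHamCycle {V : Type} (H : Dgraph V) : Prop :=
  H.IsStrong ∧ ∀ v : V, Nat.card {w : V // H.Arc v w} = 1

/-!
Each vertex has an out-arc in every spanning strong subgraph of a digraph on `n ≥ 2` vertices,
so `p` arc-disjoint spanning strong subgraphs use at least `pn` arcs: `κ_n(D) · n ≤ |A(D)|`.
Hence a minimally strong subgraph `(n,ℓ)`-connected digraph has at least `nℓ` arcs, and a
digraph with exactly `nℓ` arcs containing `ℓ` arc-disjoint spanning strong subgraphs is
minimally so, since deleting any arc leaves fewer than `nℓ` arcs. The union of `ℓ` cycles of a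
Hamiltonian decomposition of `↔K_n` is such a digraph.
-/

namespace Dgraph

variable {V : Type}

/-- The sizes of the families over which `kappaS D S` takes its supremum. -/
def packingSizes (D : Dgraph V) (S : Set V) : Set ℕ :=
  {p : ℕ | ∃ f : Fin p → StrongSub D,
    (∀ i, S ⊆ (f i).verts) ∧
    (∀ i j, i ≠ j → (f i).verts ∩ (f j).verts = S) ∧
    (∀ i j, i ≠ j → ∀ u v, ¬ ((f i).Arc u v ∧ (f j).Arc u v))}

theorem zero_mem_packingSizes (D : Dgraph V) (S : Set V) : 0 ∈ D.packingSizes S :=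
  ⟨Fin.elim0, fun i => i.elim0, fun i => i.elim0, fun i => i.elim0⟩

theorem mem_packingSizes_univ {D : Dgraph V} {p : ℕ} (G : Fin p → Dgraph V)
    (hstrong : ∀ i, (G i).IsStrong) (hsub : ∀ i u v, (G i).Arc u v → D.Arc u v)
    (hdisj : ∀ i j, i ≠ j → ∀ u v, ¬ ((G i).Arc u v ∧ (G j).Arc u v)) :
    p ∈ D.packingSizes Set.univ :=
  ⟨fun i => ⟨Set.univ, (G i).Arc, hsub i, fun _ _ _ => ⟨trivial, trivial⟩,
      fun u _ v _ => hstrong i u v⟩,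
    fun _ => subset_rfl, fun _ _ _ => Set.inter_univ _, hdisj⟩

theorem StrongSub.exists_arc_s16 [Nontrivial V] {D : Dgraph V} (F : D.StrongSub)
    (hF : F.verts = Set.univ) (v : V) : ∃ w, F.Arc v w := by
  obtain ⟨u, hu⟩ := exists_ne v
  rcases (F.strong v (hF ▸ trivial) u (hF ▸ trivial)).cases_head with h | ⟨w, hw, -⟩
  · exact absurd h.symm hu
  · exact ⟨w, hw⟩

/-- Choosing an out-arc at every vertex in each member of the family injects `Fin p × V`
into the arcs of `D`. -/
theorem mul_card_le_arcCount [Fintype V] [Nontrivial V] {D : Dgraph V} {p : ℕ}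
    (hp : p ∈ D.packingSizes Set.univ) : p * Fintype.card V ≤ D.arcCount := by
  obtain ⟨f, hspan, -, hdisj⟩ := hp
  choose g hg using fun i => (f i).exists_arc_s16 (Set.univ_subset_iff.mp (hspan i))
  have hinj : Function.Injective fun x : Fin p × V =>
      (⟨(x.2, g x.1 x.2), (f x.1).arc_sub _ _ (hg x.1 x.2)⟩ :
        {q : V × V // D.Arc q.1 q.2}) := by
    rintro ⟨i, v⟩ ⟨j, w⟩ h
    simp only [Subtype.mk.injEq, Prod.mk.injEq] at h
    obtain ⟨rfl, hgij⟩ := h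
    by_contra hij
    exact hdisj i j (fun h => hij (by rw [h])) v _ ⟨hg i v, hgij ▸ hg j v⟩
  simpa [arcCount, Nat.card_eq_fintype_card] using Nat.card_le_card_of_injective _ hinj

theorem bddAbove_packingSizes_univ [Fintype V] [Nontrivial V] (D : Dgraph V) :
    BddAbove (D.packingSizes Set.univ) :=
  ⟨D.arcCount, fun _ hp => (Nat.le_mul_of_pos_right _ Fintype.card_pos).trans
    (mul_card_le_arcCount hp)⟩

theorem kappaS_univ_mul_card_le_arcCount [Fintype V] [Nontrivial V] (D : Dgraph V) :
    D.kappaS Set.univ * Fintype.card V ≤ D.arcCount :=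
  mul_card_le_arcCount
    (Nat.sSup_mem ⟨0, D.zero_mem_packingSizes _⟩ D.bddAbove_packingSizes_univ)

theorem kappa_card_eq_kappaS_univ [Fintype V] (D : Dgraph V) :
    D.kappa (Fintype.card V) = D.kappaS Set.univ := by
  have hS : {m | ∃ S : Finset V, S.card = Fintype.card V ∧ D.kappaS ↑S = m} =
      {D.kappaS Set.univ} := by
    ext m
    constructor
    · rintro ⟨S, hS, rfl⟩
      rw [Finset.eq_univ_of_card S hS, Finset.coe_univ, Set.mem_singleton_iff]
    · rintro rfl
      exact ⟨Finset.univ, Finset.card_univ, by rw [Finset.coe_univ]⟩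
  rw [kappa, hS, csInf_singleton]

theorem arcCount_deleteArc_lt [Finite V] (D : Dgraph V) {e : V × V} (he : D.Arc e.1 e.2) :
    (D.deleteArc e).arcCount < D.arcCount := by
  have hset : {q : V × V | (D.deleteArc e).Arc q.1 q.2} = {q | D.Arc q.1 q.2} \ {e} := by
    ext q
    simp [deleteArc]
  change Set.ncard {q : V × V | (D.deleteArc e).Arc q.1 q.2} <
    Set.ncard {q : V × V | D.Arc q.1 q.2}
  rw [hset]
  exact Set.ncard_sdiff_singleton_lt_of_mem he (Set.toFinite _)

theorem MinSSC.mul_card_le_arcCount [Fintype V] [Nontrivial V] {D : Dgraph V} {ℓ : ℕ}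
    (hD : D.MinSSC (Fintype.card V) ℓ) : ℓ * Fintype.card V ≤ D.arcCount := by
  have hℓ := hD.1
  rw [kappa_card_eq_kappaS_univ] at hℓ
  exact (Nat.mul_le_mul_right _ hℓ).trans D.kappaS_univ_mul_card_le_arcCount

theorem minSSC_of_mem_packingSizes [Fintype V] [Nontrivial V] {D : Dgraph V} {ℓ : ℕ}
    (hℓ : ℓ ∈ D.packingSizes Set.univ) (hcount : D.arcCount = ℓ * Fintype.card V) :
    D.MinSSC (Fintype.card V) ℓ := by
  refine ⟨?_, fun e he => ?_⟩
  · rw [kappa_card_eq_kappaS_univ]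
    exact le_csSup D.bddAbove_packingSizes_univ hℓ
  · rw [kappa_card_eq_kappaS_univ]
    have hlt := (kappaS_univ_mul_card_le_arcCount _).trans_lt (D.arcCount_deleteArc_lt he)
    rw [hcount] at hlt
    exact Nat.le_sub_one_of_lt (Nat.lt_of_mul_lt_mul_right hlt)

theorem fMin_eq_of_minSSC {n ℓ : ℕ} (hn : 2 ≤ n) {D : Dgraph (Fin n)} (hD : D.MinSSC n ℓ)
    (hcount : D.arcCount = ℓ * n) : fMin n n ℓ = ℓ * n := by
  have : Nontrivial (Fin n) := Fin.nontrivial_iff_two_le.mpr hn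
  refine le_antisymm (Nat.sInf_le ⟨D, hD, hcount⟩) (le_csInf ⟨_, D, hD, hcount⟩ ?_)
  rintro _ ⟨D', hD', rfl⟩
  have hD'' : D'.MinSSC (Fintype.card (Fin n)) ℓ := by rwa [Fintype.card_fin]
  simpa using hD''.mul_card_le_arcCount

theorem IsHamCycle.existsUnique_arc {H : Dgraph V} (hH : H.IsHamCycle) (v : V) :
    ∃! w, H.Arc v w := by
  obtain ⟨⟨w, hw⟩, huniq⟩ := Nat.card_eq_one_iff_exists.mp (hH.2 v)
  exact ⟨w, hw, fun w' hw' => congrArg Subtype.val (huniq ⟨w', hw'⟩)⟩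

def biUnion {ι : Type} (H : ι → Dgraph V) (s : Set ι) : Dgraph V where
  Arc u v := ∃ i, i ∈ s ∧ (H i).Arc u v
  loopless v := fun ⟨i, _, h⟩ => (H i).loopless v h

theorem arcCount_biUnion [Fintype V] {ι : Type} (H : ι → Dgraph V) (s : Set ι)
    (hsucc : ∀ i ∈ s, ∀ v, ∃! w, (H i).Arc v w)
    (hdisj : ∀ i j, i ≠ j → ∀ u v, ¬ ((H i).Arc u v ∧ (H j).Arc u v)) :
    (biUnion H s).arcCount = Nat.card s * Fintype.card V := by
  choose succ harc huniq using fun i : s => hsucc i i.2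
  let toArc : s × V → {q : V × V // (biUnion H s).Arc q.1 q.2} :=
    fun x => ⟨(x.2, succ x.1 x.2), x.1, x.1.2, harc x.1 x.2⟩
  have hbij : Function.Bijective toArc := by
    refine ⟨?_, ?_⟩
    · rintro ⟨i, v⟩ ⟨j, w⟩ h
      obtain ⟨rfl, hij⟩ := Prod.mk.inj (congrArg Subtype.val h)
      change succ i v = succ j v at hij
      by_contra hne
      exact hdisj i j (fun h => hne (by rw [Subtype.ext h])) v _
        ⟨harc i v, hij ▸ harc j v⟩
    · rintro ⟨⟨u, v⟩, i, hi, huv⟩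
      exact ⟨(⟨i, hi⟩, u), Subtype.ext (Prod.ext rfl (huniq ⟨i, hi⟩ u v huv).symm)⟩
  rw [arcCount, ← Nat.card_congr (Equiv.ofBijective toArc hbij), Nat.card_prod,
    Nat.card_eq_fintype_card (α := V)]

end Dgraph

theorem stmt16_general (n ℓ : ℕ)
    (hl2 : 2 ≤ ℓ) (hln : ℓ ≤ n - 1)
    (H : Fin (n - 1) → Dgraph (Fin n))
    (hHam : ∀ i, (H i).IsHamCycle)
    (hdisj : ∀ i j, i ≠ j → ∀ u v, ¬ ((H i).Arc u v ∧ (H j).Arc u v)) :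
    let Dl : Dgraph (Fin n) :=
      ⟨fun u v => ∃ i : Fin (n - 1), (i : ℕ) < ℓ ∧ (H i).Arc u v,
        fun v h => (H h.choose).loopless v h.choose_spec.2⟩
    Dl.MinSSC n ℓ ∧ Dl.arcCount = n * ℓ ∧ Dgraph.fMin n n ℓ = n * ℓ := by
  intro Dl
  have hn : 2 ≤ n := by omega
  have : Nontrivial (Fin n) := Fin.nontrivial_iff_two_le.mpr hn
  have hcount : Dl.arcCount = ℓ * n := by
    have := Dgraph.arcCount_biUnion H {i | (i : ℕ) < ℓ}
      (fun i _ => (hHam i).existsUnique_arc) hdisj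
    have hs : Nat.card {i : Fin (n - 1) | (i : ℕ) < ℓ} = ℓ :=
      (Nat.card_congr (Fin.castLEquiv hln).symm).trans (Nat.card_fin ℓ)
    rwa [hs, Fintype.card_fin] at this
  have hpack : ℓ ∈ Dl.packingSizes Set.univ :=
    Dgraph.mem_packingSizes_univ (fun i => H (Fin.castLE hln i)) (fun _ => (hHam _).1)
      (fun i _ _ h => ⟨_, i.2, h⟩) fun _ _ hij => hdisj _ _ ((Fin.castLE_injective hln).ne hij)
  have hmin : Dl.MinSSC n ℓ := by
    simpa using Dgraph.minSSC_of_mem_packingSizes hpack (by simpa using hcount)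
  refine ⟨hmin, by rw [hcount, mul_comm], ?_⟩
  rw [Dgraph.fMin_eq_of_minSSC hn hmin hcount, mul_comm]

/-- For `n ∉ {4, 6}` and `2 ≤ ℓ ≤ n - 1`, `f(n, n, ℓ) = nℓ`: the union of `ℓ`
cycles from a Hamiltonian decomposition of `↔K_n` is minimally strong subgraph
`(n,ℓ)`-connected with `nℓ` arcs. -/
theorem stmt16 (n ℓ : ℕ) (hn4 : n ≠ 4) (hn6 : n ≠ 6)
    (hl2 : 2 ≤ ℓ) (hln : ℓ ≤ n - 1)
    (H : Fin (n - 1) → Dgraph (Fin n))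
    (hHam : ∀ i, (H i).IsHamCycle)
    (hdisj : ∀ i j, i ≠ j → ∀ u v, ¬ ((H i).Arc u v ∧ (H j).Arc u v))
    (hcover : ∀ u v : Fin n, u ≠ v ↔ ∃ i, (H i).Arc u v) :
    let Dl : Dgraph (Fin n) :=
      ⟨fun u v => ∃ i : Fin (n - 1), (i : ℕ) < ℓ ∧ (H i).Arc u v,
        fun v h => (H h.choose).loopless v h.choose_spec.2⟩
    Dl.MinSSC n ℓ ∧ Dl.arcCount = n * ℓ ∧ Dgraph.fMin n n ℓ = n * ℓ :=
  stmt16_general n ℓ hl2 hln H hHam hdisj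
end

section
/- Every strong digraph D on n vertices has a strong spanning subdigraph H with at most 2n−2 arcs; moreover, if H has exactly 2n−2 arcs then H is a symmetric digraph whose underlying undirected graph is a tree. -/
/-!
Grow a vertex set `U` with a strong arc set `K` on it, keeping `#K ≤ 2 #U - 2` and `K` symmetric
whenever equality holds. A new part of the digraph is absorbed along an ear that leaves `U` by an
arc `u → y` and returns to `U` along a fixed in-forest rooted in `U`; an ear through `w` new
vertices costs at most `w + 1` arcs, less than `2 w` unless `w = 1`. An ear `u → y → v` with
`u ≠ v` attached to a symmetric `K` makes the first arc of a `u`–`v` path in `K` redundant, so the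
bound becomes strict. At the end, a strong symmetric digraph with `2 n - 2` arcs has a connected
underlying graph with `n - 1` edges, which is a tree.
-/

open Relation Finset

namespace Relation

variable {α : Type} {r : α → α → Prop}

theorem ReflTransGen.exists_boundary {p : α → Prop} {a b : α} (h : ReflTransGen r a b)
    (ha : p a) (hb : ¬ p b) : ∃ x y, p x ∧ ¬ p y ∧ r x y := by
  induction h with
  | refl => exact absurd ha hb
  | @tail c d _ hcd ih =>
    by_cases hc : p c
    · exact ⟨c, d, hc, hb, hcd⟩
    · exact ih hc

theorem ReflTransGen.exists_head_avoiding {a b : α} (h : ReflTransGen r a b) (hab : a ≠ b) :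
    ∃ c, r a c ∧ ReflTransGen (fun x y => r x y ∧ x ≠ a ∧ y ≠ a) c b := by
  induction h with
  | refl => exact absurd rfl hab
  | @tail c d _ hcd ih =>
    by_cases hc : a = c
    · subst hc
      exact ⟨d, hcd, .refl⟩
    · obtain ⟨e, hae, hec⟩ := ih hc
      exact ⟨e, hae, hec.tail ⟨hcd, Ne.symm hc, Ne.symm hab⟩⟩

end Relation

namespace Dgraph

variable {V : Type}

theorem IsStrong.connected_underlying [Nonempty V] {D : Dgraph V} (hD : D.IsStrong) :
    D.underlying.Connected := by
  refine SimpleGraph.Connected.mk fun a b => ?_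
  induction hD a b with
  | refl => rfl
  | tail _ hcd ih => exact ih.trans (SimpleGraph.Adj.reachable (Or.inl hcd))

theorem IsSymmetric.arcCount_eq_two_mul [Fintype V] {D : Dgraph V} (hD : D.IsSymmetric) :
    D.arcCount = 2 * Nat.card D.underlying.edgeSet := by
  classical
  have e : {p : V × V // D.Arc p.1 p.2} ≃ D.underlying.Dart :=
    { toFun p := ⟨p.1, Or.inl p.2⟩
      invFun d := ⟨d.toProd, d.adj.elim id (hD _ _)⟩ }
  rw [arcCount, Nat.card_congr e, Nat.card_eq_fintype_card,
    SimpleGraph.dart_card_eq_twice_card_edges, SimpleGraph.edgeFinset_card,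
    Nat.card_eq_fintype_card]

theorem IsStrong.isTree_underlying [Fintype V] [Nonempty V] {D : Dgraph V} (hs : D.IsStrong)
    (hsymm : D.IsSymmetric) (hcard : D.arcCount + 2 = 2 * Fintype.card V) :
    D.underlying.IsTree := by
  rw [SimpleGraph.isTree_iff_connected_and_card, Nat.card_eq_fintype_card (α := V)]
  refine ⟨hs.connected_underlying, ?_⟩
  rw [hsymm.arcCount_eq_two_mul] at hcard
  omega

structure IsStrongOn (D : Dgraph V) (U : Finset V) (K : Finset (V × V)) : Prop where
  arc : ∀ p ∈ K, D.Arc p.1 p.2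
  mem : ∀ p ∈ K, p.1 ∈ U ∧ p.2 ∈ U
  reach : ∀ a ∈ U, ∀ b ∈ U, ReflTransGen (fun x y => (x, y) ∈ K) a b

def stepOutside (U : Finset V) (f : V → V) (a b : V) : Prop := a ∉ U ∧ f a = b

structure IsSparseStrongOn (D : Dgraph V) (U : Finset V) (K : Finset (V × V)) : Prop
    extends D.IsStrongOn U K where
  card_le : #K + 2 ≤ 2 * #U
  symm_of_card_eq : #K + 2 = 2 * #U → ∀ p ∈ K, p.swap ∈ K

section Construction

variable {D : Dgraph V} {U U' : Finset V} {K K' : Finset (V × V)}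

theorem IsStrongOn.of_reach (h : D.IsStrongOn U K) (hK : K ⊆ K')
    (harc : ∀ p ∈ K', D.Arc p.1 p.2) (hmem : ∀ p ∈ K', p.1 ∈ U' ∧ p.2 ∈ U')
    (hreach : ∀ x ∈ U', x ∉ U → ∃ a ∈ U, ∃ b ∈ U,
      ReflTransGen (fun x y => (x, y) ∈ K') a x ∧ ReflTransGen (fun x y => (x, y) ∈ K') x b) :
    D.IsStrongOn U' K' := by
  have hmono := ReflTransGen.mono (r := fun x y => (x, y) ∈ K) fun _ _ hxy => hK hxy
  have hreach' : ∀ x ∈ U', ∃ a ∈ U, ∃ b ∈ U,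
      ReflTransGen (fun x y => (x, y) ∈ K') a x ∧ ReflTransGen (fun x y => (x, y) ∈ K') x b :=
    fun x hx => by
      by_cases hxU : x ∈ U
      · exact ⟨x, hxU, x, hxU, .refl, .refl⟩
      · exact hreach x hx hxU
  refine ⟨harc, hmem, fun x hx z hz => ?_⟩
  obtain ⟨-, -, b, hb, -, hxb⟩ := hreach' x hx
  obtain ⟨a, ha, -, -, haz, -⟩ := hreach' z hz
  exact hxb.trans ((hmono _ _ (h.reach b hb a ha)).trans haz)

variable [DecidableEq V]

theorem IsStrongOn.insert_ear (h : D.IsStrongOn U K) {u v y : V} (hu : u ∈ U) (hv : v ∈ U)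
    (huy : D.Arc u y) (hyv : D.Arc y v) :
    D.IsStrongOn (insert y U) (insert (u, y) (insert (y, v) K)) := by
  refine h.of_reach (fun p hp => mem_insert_of_mem (mem_insert_of_mem hp)) ?_ ?_ ?_
  · simp only [mem_insert, forall_eq_or_imp]
    exact ⟨huy, hyv, h.arc⟩
  · intro p hp
    rcases mem_insert.1 hp with rfl | hp
    · exact ⟨mem_insert_of_mem hu, mem_insert_self _ _⟩
    rcases mem_insert.1 hp with rfl | hp
    · exact ⟨mem_insert_self _ _, mem_insert_of_mem hv⟩
    · exact ⟨mem_insert_of_mem (h.mem p hp).1, mem_insert_of_mem (h.mem p hp).2⟩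
  · intro x hx hxU
    obtain rfl : x = y := (mem_insert.1 hx).resolve_right hxU
    exact ⟨u, hu, v, hv, .single (mem_insert_self _ _),
      .single (mem_insert_of_mem (mem_insert_self _ _))⟩

theorem IsStrongOn.card_insert_ear (h : D.IsStrongOn U K) {u v y : V} (hu : u ∈ U)
    (hy : y ∉ U) : #(insert (u, y) (insert (y, v) K)) = #K + 2 := by
  have hyv : (y, v) ∉ K := fun hp => hy (h.mem _ hp).1
  have huy : (u, y) ∉ insert (y, v) K := by
    simp only [mem_insert, Prod.mk.injEq, not_or]
    exact ⟨fun h' => hy (h'.1 ▸ hu), fun hp => hy (h.mem _ hp).2⟩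
  rw [card_insert_of_notMem huy, card_insert_of_notMem hyv]

theorem IsStrongOn.erase (h : D.IsStrongOn U K) {e : V × V}
    (he : ReflTransGen (fun x y => (x, y) ∈ K.erase e) e.1 e.2) :
    D.IsStrongOn U (K.erase e) := by
  refine ⟨fun p hp => h.arc p (mem_of_mem_erase hp), fun p hp => h.mem p (mem_of_mem_erase hp),
    fun a ha b hb => reflTransGen_closed (fun x y hxy => ?_) _ _ (h.reach a ha b hb)⟩
  by_cases hxy' : (x, y) = e
  · exact hxy' ▸ he
  · exact .single (mem_erase.2 ⟨hxy', hxy⟩)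

/-- If a `u`–`v` path in `K` starts with `u → q`, then after adding `u → y → v` the arc `u → q`
is redundant: `K` being symmetric, `v` returns to `q` along the reversed path, which avoids `u`. -/
theorem IsStrongOn.reroute (h : D.IsStrongOn U K) (hsymm : ∀ p ∈ K, p.swap ∈ K) {u v y : V}
    (hu : u ∈ U) (hv : v ∈ U) (huv : u ≠ v) (hy : y ∉ U) (huy : D.Arc u y) (hyv : D.Arc y v) :
    ∃ K', D.IsStrongOn (insert y U) K' ∧ #K' = #K + 1 := by
  obtain ⟨q, huq, hqv⟩ := (h.reach u hu v hv).exists_head_avoiding huv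
  have hyu : y ≠ u := fun hyu => hy (hyu ▸ hu)
  have hvq : ReflTransGen (fun x z => (x, z) ∈ (insert (u, y) (insert (y, v) K)).erase (u, q))
      v q := by
    refine ReflTransGen.mono (fun a b hab => ?_) _ _ (reflTransGen_swap.2 hqv)
    exact mem_erase.2 ⟨fun he => hab.2.2 (Prod.mk.inj he).1,
      mem_insert_of_mem (mem_insert_of_mem (hsymm _ hab.1))⟩
  refine ⟨_, (h.insert_ear hu hv huy hyv).erase (e := (u, q)) ?_, ?_⟩
  · refine ReflTransGen.head (mem_erase.2 ⟨fun he => hy ?_, mem_insert_self _ _⟩)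
      (ReflTransGen.head (mem_erase.2 ⟨fun he => hyu (Prod.mk.inj he).1,
        mem_insert_of_mem (mem_insert_self _ _)⟩) hvq)
    exact (Prod.mk.inj he).2 ▸ (h.mem _ huq).2
  · rw [card_erase_of_mem (mem_insert_of_mem (mem_insert_of_mem huq)),
      h.card_insert_ear hu hy]
    rfl

theorem IsStrong.exists_forest_into [Fintype V] (hD : D.IsStrong) (hU : U.Nonempty) :
    ∃ f : V → V, (∀ x ∉ U, D.Arc x (f x)) ∧
      ∀ x, ∃ t ∈ U, ReflTransGen (stepOutside U f) x t := by
  refine Finset.strongDownwardInductionOn (n := Fintype.card V)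
    (p := fun U => U.Nonempty → ∃ f : V → V, (∀ x ∉ U, D.Arc x (f x)) ∧
      ∀ x, ∃ t ∈ U, ReflTransGen (stepOutside U f) x t)
    U (fun U ih _ hU => ?_) (card_le_univ U) hU
  by_cases hUu : U = univ
  · exact ⟨id, by simp [hUu], fun x => ⟨x, by simp [hUu], .refl⟩⟩
  obtain ⟨w, hw⟩ : ∃ w, w ∉ U := by simpa [eq_univ_iff_forall] using hUu
  obtain ⟨u₀, hu₀⟩ := hU
  obtain ⟨x, t, hx, ht, hxt⟩ :=
    (hD w u₀).exists_boundary (p := (· ∉ U)) hw (not_not.2 hu₀)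
  rw [not_not] at ht
  obtain ⟨f, hfA, hfU⟩ := ih (card_le_univ _) (ssubset_insert hx) (insert_nonempty _ _)
  refine ⟨Function.update f x t, fun z hz => ?_, fun z => ?_⟩
  · by_cases hzx : z = x
    · subst hzx
      simpa using hxt
    · simpa [hzx] using hfA z (by simp [hzx, hz])
  · have hmono : ReflTransGen (stepOutside (insert x U) f) ≤
        ReflTransGen (stepOutside U (Function.update f x t)) := by
      refine ReflTransGen.mono fun a b ⟨ha, hab⟩ => ?_
      rw [mem_insert, not_or] at ha
      exact ⟨ha.2, by simpa [ha.1] using hab⟩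
    obtain ⟨s, hs, hzs⟩ := hfU z
    rcases mem_insert.1 hs with rfl | hs
    · exact ⟨t, ht, (hmono _ _ hzs).tail ⟨hx, by simp⟩⟩
    · exact ⟨s, hs, hmono _ _ hzs⟩

theorem IsStrongOn.union_ear (h : D.IsStrongOn U K) {f : V → V} {u y : V} {W : Finset V}
    (hu : u ∈ U) (huy : D.Arc u y) (hfA : ∀ x ∉ U, D.Arc x (f x))
    (hfU : ∀ x, ∃ t ∈ U, ReflTransGen (stepOutside U f) x t)
    (hW : ∀ w, w ∈ W ↔ w ∉ U ∧ ReflTransGen (stepOutside U f) y w) :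
    D.IsStrongOn (U ∪ W) (insert (u, y) (K ∪ W.image fun w => (w, f w))) := by
  set K' := insert (u, y) (K ∪ W.image fun w => (w, f w))
  have hmemW : ∀ x, ReflTransGen (stepOutside U f) y x → x ∈ U ∪ W := fun x hx =>
    if hxU : x ∈ U then mem_union_left _ hxU else mem_union_right _ ((hW x).2 ⟨hxU, hx⟩)
  have hlift : ∀ a b, ReflTransGen (stepOutside U f) y a → ReflTransGen (stepOutside U f) a b →
      ReflTransGen (fun x z => (x, z) ∈ K') a b := by
    intro a b hya hab
    induction hab with
    | refl => exact .refl
    | @tail c d hac hcd ih =>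
      obtain ⟨hcU, rfl⟩ := hcd
      refine ih.tail (mem_insert_of_mem (mem_union_right _ (mem_image_of_mem _ ?_)))
      exact (hW c).2 ⟨hcU, hya.trans hac⟩
  refine h.of_reach (fun p hp => mem_insert_of_mem (mem_union_left _ hp)) ?_ ?_ ?_
  · simp only [K', mem_insert, forall_eq_or_imp]
    refine ⟨huy, fun p hp => ?_⟩
    obtain hp | hp := mem_union.1 hp
    · exact h.arc p hp
    obtain ⟨w, hw, rfl⟩ := mem_image.1 hp
    exact hfA w ((hW w).1 hw).1
  · simp only [K', mem_insert, forall_eq_or_imp]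
    refine ⟨⟨mem_union_left _ hu, hmemW y .refl⟩, fun p hp => ?_⟩
    obtain hp | hp := mem_union.1 hp
    · exact ⟨mem_union_left _ (h.mem p hp).1, mem_union_left _ (h.mem p hp).2⟩
    obtain ⟨w, hw, rfl⟩ := mem_image.1 hp
    obtain ⟨hwU, hyw⟩ := (hW w).1 hw
    exact ⟨mem_union_right _ hw, hmemW _ (hyw.tail ⟨hwU, rfl⟩)⟩
  · intro x hx hxU
    have hyx := ((hW x).1 ((mem_union.1 hx).resolve_left hxU)).2
    obtain ⟨t, ht, hxt⟩ := hfU x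
    exact ⟨u, hu, t, ht, .head (mem_insert_self _ _) (hlift y x .refl hyx), hlift x t hyx hxt⟩

theorem IsSparseStrongOn.exists_insert_of_ear (h : D.IsSparseStrongOn U K) {u v y : V}
    (hu : u ∈ U) (hv : v ∈ U) (hy : y ∉ U) (huy : D.Arc u y) (hyv : D.Arc y v) :
    ∃ K', D.IsSparseStrongOn (insert y U) K' := by
  have hcardU : #(insert y U) = #U + 1 := card_insert_of_notMem hy
  have hcardK := h.toIsStrongOn.card_insert_ear (v := v) hu hy
  have hle := h.card_le
  by_cases huv : u = v
  · subst huv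
    refine ⟨_, h.toIsStrongOn.insert_ear hu hu huy hyv, by omega, fun hcard p hp => ?_⟩
    have hsymm := h.symm_of_card_eq (by omega)
    rcases mem_insert.1 hp with rfl | hp
    · exact mem_insert_of_mem (mem_insert_self _ _)
    rcases mem_insert.1 hp with rfl | hp
    · exact mem_insert_self _ _
    · exact mem_insert_of_mem (mem_insert_of_mem (hsymm p hp))
  by_cases heq : #K + 2 = 2 * #U
  · obtain ⟨K', hK', hcard⟩ :=
      h.toIsStrongOn.reroute (h.symm_of_card_eq heq) hu hv huv hy huy hyv
    exact ⟨K', hK', by omega, fun _ => by omega⟩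
  · exact ⟨_, h.toIsStrongOn.insert_ear hu hv huy hyv, by omega, fun _ => by omega⟩

theorem IsSparseStrongOn.exists_ssuperset_of_long_ear [Fintype V] (h : D.IsSparseStrongOn U K)
    {f : V → V} {u y : V} (hu : u ∈ U) (hy : y ∉ U) (huy : D.Arc u y) (hfA : ∀ x ∉ U, D.Arc x (f x))
    (hfU : ∀ x, ∃ t ∈ U, ReflTransGen (stepOutside U f) x t) (hfy : f y ∉ U) :
    ∃ U' K', U ⊂ U' ∧ D.IsSparseStrongOn U' K' := by
  classical
  set W := univ.filter fun w => w ∉ U ∧ ReflTransGen (stepOutside U f) y w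
  have hW : ∀ w, w ∈ W ↔ w ∉ U ∧ ReflTransGen (stepOutside U f) y w := by simp [W]
  have hyW : y ∈ W := (hW y).2 ⟨hy, .refl⟩
  have hfyW : f y ∈ W := (hW _).2 ⟨hfy, .single ⟨hy, rfl⟩⟩
  have hWcard : 2 ≤ #W :=
    one_lt_card.2 ⟨y, hyW, f y, hfyW, fun e => D.loopless y (by simpa [← e] using hfA y hy)⟩
  have hUW : #(U ∪ W) = #U + #W :=
    card_union_of_disjoint (disjoint_left.2 fun x hx hxW => ((hW x).1 hxW).1 hx)
  have hK : #(insert (u, y) (K ∪ W.image fun w => (w, f w))) ≤ #K + #W + 1 :=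
    (card_insert_le _ _).trans (Nat.add_le_add_right
      ((card_union_le _ _).trans (Nat.add_le_add_left card_image_le _)) _)
  have hle := h.card_le
  have hUW' : U ⊂ U ∪ W :=
    (ssubset_iff_of_subset subset_union_left).2 ⟨y, mem_union_right _ hyW, hy⟩
  exact ⟨U ∪ W, _, hUW', h.toIsStrongOn.union_ear hu huy hfA hfU hW, by omega, fun _ => by omega⟩

theorem IsSparseStrongOn.exists_ssuperset [Fintype V] (hD : D.IsStrong)
    (h : D.IsSparseStrongOn U K) (hU : U ≠ univ) :
    ∃ U' K', U ⊂ U' ∧ D.IsSparseStrongOn U' K' := by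
  obtain ⟨u₀, hu₀⟩ : U.Nonempty := card_pos.1 (by have := h.card_le; omega)
  obtain ⟨w, hw⟩ : ∃ w, w ∉ U := by simpa [eq_univ_iff_forall] using hU
  obtain ⟨u, y, hu, hy, huy⟩ := (hD u₀ w).exists_boundary (p := (· ∈ U)) hu₀ hw
  obtain ⟨f, hfA, hfU⟩ := hD.exists_forest_into ⟨u₀, hu₀⟩
  by_cases hfy : f y ∈ U
  · obtain ⟨K', hK'⟩ := h.exists_insert_of_ear hu hfy hy huy (hfA y hy)
    exact ⟨_, K', ssubset_insert hy, hK'⟩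
  · exact h.exists_ssuperset_of_long_ear hu hy huy hfA hfU hfy

end Construction

theorem IsStrong.exists_isSparseStrongOn_univ [Fintype V] [Nonempty V] {D : Dgraph V}
    (hD : D.IsStrong) : ∃ K, D.IsSparseStrongOn univ K := by
  classical
  obtain ⟨v⟩ := ‹Nonempty V›
  have h₀ : D.IsSparseStrongOn {v} ∅ :=
    ⟨⟨by simp, by simp, by simp only [mem_singleton]; rintro a rfl b rfl; rfl⟩,
      by simp, by simp⟩
  refine Finset.strongDownwardInductionOn (n := Fintype.card V)
    (p := fun U => (∃ K, D.IsSparseStrongOn U K) → ∃ K, D.IsSparseStrongOn univ K) {v}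
    (fun U ih _ ⟨K, hK⟩ => ?_) (card_le_univ _) ⟨∅, h₀⟩
  by_cases hU : U = univ
  · exact ⟨K, hU ▸ hK⟩
  obtain ⟨U', K', hUU', hK'⟩ := hK.exists_ssuperset hD hU
  exact ih (card_le_univ _) hUU' ⟨K', hK'⟩

end Dgraph

/-- Every strong digraph on `n` vertices has a strong spanning subdigraph `H`
with at most `2n - 2` arcs; if `H` has exactly `2n - 2` arcs then `H` is a
symmetric digraph whose underlying undirected graph is a tree. -/
theorem stmt17 {V : Type} [Fintype V] [Nonempty V] (D : Dgraph V) (n : ℕ)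
    (hn : Fintype.card V = n) (hD : D.IsStrong) :
    ∃ H : Dgraph V, (∀ u v, H.Arc u v → D.Arc u v) ∧ H.IsStrong ∧
      H.arcCount ≤ 2 * n - 2 ∧
      (H.arcCount = 2 * n - 2 → H.IsSymmetric ∧ H.underlying.IsTree) := by
  classical
  obtain ⟨K, hK⟩ := hD.exists_isSparseStrongOn_univ
  let H : Dgraph V := ⟨fun a b => (a, b) ∈ K, fun v hv => D.loopless v (hK.arc _ hv)⟩
  have hH : H.arcCount = #K := Nat.card_eq_finsetCard K
  have hs : H.IsStrong := fun a b => hK.reach a (mem_univ a) b (mem_univ b)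
  have hle := hK.card_le
  rw [card_univ, hn] at hle
  refine ⟨H, fun u v huv => hK.arc _ huv, hs, by omega, fun heq => ?_⟩
  have hsymm : H.IsSymmetric := fun a b hab =>
    hK.symm_of_card_eq (by rw [card_univ, hn]; omega) _ hab
  exact ⟨hsymm, hs.isTree_underlying hsymm (by rw [hH, hn]; omega)⟩
end

section
/- For every 2 ≤ k ≤ n, F(n,k,1) = 2(n−1), and the minimally strong subgraph (k,1)-connected digraphs attaining this maximum are exactly the symmetric digraphs whose underlying undirected graphs are trees. -/
/-!
For `2 ≤ k ≤ n`, `κ_k(D) ≥ 1` says exactly that `D` is strong (one strong subgraph through any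
`k`-set, and any two vertices lie in a common `k`-set), so the minimally strong subgraph
`(k,1)`-connected digraphs are the minimally strong digraphs.

If `D` is minimally strong and the arcs `R` strongly connect a vertex set `X`, then `R` together
with an out-branching from `X` and an in-branching into `X` is a strong spanning subdigraph with at
most `|R| + 2(n - |X|)` arcs; by minimality it contains every arc of `D`. A single vertex gives
`2(n - 1)` arcs. If an arc `ab` has no reverse, a shortest path from `b` to `a` closes a cycle of
length `m + 1 ≥ 3`, which gives at most `2n - 3` arcs. Hence the extremal digraphs are symmetric,
and a symmetric digraph is minimally strong iff every edge of its underlying graph is a bridge,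
i.e. iff that graph is a tree; it then has `2(n - 1)` arcs.
-/

open Relation Finset

theorem Relation.ReflTransGen.exists_arc_leaving {α : Type*} {r : α → α → Prop} {s : Set α}
    {a b : α} (h : ReflTransGen r a b) (ha : a ∈ s) (hb : b ∉ s) :
    ∃ u v, u ∈ s ∧ v ∉ s ∧ r u v := by
  induction h with
  | refl => exact absurd ha hb
  | @tail c d _ hcd ih =>
    by_cases hc : c ∈ s
    · exact ⟨c, d, hc, hb, hcd⟩
    · exact ih hc

theorem Relation.ReflTransGen.exists_walk {α : Type*} {r : α → α → Prop} {a b : α}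
    (h : ReflTransGen r a b) :
    ∃ (m : ℕ) (f : ℕ → α), f 0 = a ∧ f m = b ∧ ∀ i < m, r (f i) (f (i + 1)) := by
  induction h with
  | refl => exact ⟨0, fun _ => a, rfl, rfl, by simp⟩
  | @tail c d _ hcd ih =>
    obtain ⟨m, f, h0, hm, hf⟩ := ih
    refine ⟨m + 1, Function.update f (m + 1) d, by simp [h0], by simp, fun i hi => ?_⟩
    rcases Nat.lt_succ_iff_lt_or_eq.1 hi with hi | rfl
    · simpa [Function.update_apply, show i ≠ m + 1 by omega, show i ≠ m by omega] using hf i hi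
    · simpa [hm] using hcd

/-- A shortest walk visits no vertex twice: a repetition `f i = f j` could be cut out. -/
theorem Relation.ReflTransGen.exists_injOn_walk {α : Type*} {r : α → α → Prop} {a b : α}
    (h : ReflTransGen r a b) :
    ∃ (m : ℕ) (f : ℕ → α), f 0 = a ∧ f m = b ∧ (∀ i < m, r (f i) (f (i + 1))) ∧
      Set.InjOn f (Set.Iic m) := by
  classical
  have hex := h.exists_walk
  obtain ⟨f, h0, hm, hf⟩ := Nat.find_spec hex
  refine ⟨Nat.find hex, f, h0, hm, hf, ?_⟩
  have hcut : ∀ i j, i < j → j ≤ Nat.find hex → f i ≠ f j := by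
    intro i j hij hj hfij
    refine Nat.find_min hex (m := Nat.find hex - (j - i)) (by omega)
      ⟨fun t => if t < i then f t else f (t + (j - i)), ?_, ?_, fun t ht => ?_⟩
    · dsimp only
      split_ifs with hi
      · exact h0
      · simp [show i = 0 by omega, ← hfij, h0]
    · simp only [show ¬ Nat.find hex - (j - i) < i by omega, if_false]
      rwa [show Nat.find hex - (j - i) + (j - i) = Nat.find hex by omega]
    · by_cases hti : t + 1 < i
      · simpa [show t < i by omega, hti] using hf t (by omega)
      by_cases hti' : t < i
      · simpa [hti', hti, show t + 1 = i by omega, hfij,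
          show i + (j - i) = j by omega] using hf t (by omega)
      · simpa [hti', hti, show t + 1 + (j - i) = t + (j - i) + 1 by omega]
          using hf (t + (j - i)) (by omega)
  intro i hi j hj hfij
  by_contra hne
  rcases lt_or_gt_of_ne hne with hlt | hlt
  · exact hcut i j hlt hj hfij
  · exact hcut j i hlt hi hfij.symm

theorem Relation.exists_branching {V : Type*} [Fintype V] [DecidableEq V] (A : V → V → Prop)
    (X : Finset V) (hX : ∀ v, ∃ x ∈ X, ReflTransGen A x v) :
    ∃ B : Finset (V × V), (∀ e ∈ B, A e.1 e.2) ∧ #B ≤ #Xᶜ ∧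
      ∀ v, ∃ x ∈ X, ReflTransGen (fun a b => (a, b) ∈ B) x v := by
  by_cases hfull : ∀ v, v ∈ X
  · exact ⟨∅, by simp, by simp, fun v => ⟨v, hfull v, .refl⟩⟩
  push Not at hfull
  obtain ⟨w, hw⟩ := hfull
  obtain ⟨x, hx, hxw⟩ := hX w
  obtain ⟨u, v, hu, hv, huv⟩ := hxw.exists_arc_leaving (s := X) hx hw
  have hdec : #(insert v X)ᶜ < #Xᶜ :=
    card_lt_card (compl_ssubset_compl.2 (ssubset_insert hv))
  obtain ⟨B, hBA, hBcard, hBreach⟩ := exists_branching A (insert v X) fun y =>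
    let ⟨x, hx, hxy⟩ := hX y
    ⟨x, mem_insert_of_mem hx, hxy⟩
  refine ⟨insert (u, v) B, ?_, ?_, fun y => ?_⟩
  · simpa [huv] using hBA
  · exact (card_insert_le _ _).trans (by omega)
  · have hmono : ∀ a b, (a, b) ∈ B → (a, b) ∈ insert (u, v) B := fun _ _ => mem_insert_of_mem
    obtain ⟨x, hx, hxy⟩ := hBreach y
    rcases mem_insert.1 hx with rfl | hx
    · exact ⟨u, hu, .head (mem_insert_self _ _) (ReflTransGen.mono hmono _ _ hxy)⟩
    · exact ⟨x, hx, ReflTransGen.mono hmono _ _ hxy⟩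
termination_by #Xᶜ
decreasing_by exact hdec

namespace Dgraph

variable {V : Type}

def IsMinStrong (D : Dgraph V) : Prop :=
  D.IsStrong ∧ ∀ e : V × V, D.Arc e.1 e.2 → ¬ (D.deleteArc e).IsStrong

theorem arcCount_le_card {D : Dgraph V} {T : Finset (V × V)} (h : ∀ e, D.Arc e.1 e.2 → e ∈ T) :
    D.arcCount ≤ #T := by
  rw [arcCount, ← Nat.card_eq_finsetCard]
  exact Nat.card_le_card_of_injective (fun e => ⟨e.1, h e.1 e.2⟩) fun e e' he =>
    Subtype.ext (by simpa using he)

theorem IsMinStrong.arc_mem {D : Dgraph V} (hD : D.IsMinStrong) {T : Finset (V × V)}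
    (hTD : ∀ e ∈ T, D.Arc e.1 e.2) (hT : ∀ u v, ReflTransGen (fun a b => (a, b) ∈ T) u v)
    {e : V × V} (he : D.Arc e.1 e.2) : e ∈ T := by
  by_contra heT
  exact hD.2 e he fun u v =>
    ReflTransGen.mono (fun a b hab => ⟨hTD _ hab, fun h => heT (h ▸ hab)⟩) _ _ (hT u v)

section Counting

variable [Fintype V] [DecidableEq V]

/-- `T` is `R` together with an out-branching from `X` and an in-branching into `X`. -/
theorem IsStrong.exists_spanning_of_core {D : Dgraph V} (hD : D.IsStrong) {X : Finset V}
    (hX : X.Nonempty) {R : Finset (V × V)} (hRD : ∀ e ∈ R, D.Arc e.1 e.2)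
    (hR : ∀ x ∈ X, ∀ y ∈ X, ReflTransGen (fun a b => (a, b) ∈ R) x y) :
    ∃ T : Finset (V × V), (∀ e ∈ T, D.Arc e.1 e.2) ∧ #T ≤ #R + 2 * #Xᶜ ∧
      ∀ u v, ReflTransGen (fun a b => (a, b) ∈ T) u v := by
  obtain ⟨r, hr⟩ := hX
  obtain ⟨Bout, hBoutD, hBoutcard, hBout⟩ :=
    exists_branching D.Arc X fun v => ⟨r, hr, hD r v⟩
  obtain ⟨Bin, hBinD, hBincard, hBin⟩ :=
    exists_branching (Function.swap D.Arc) X fun v => ⟨r, hr, (hD v r).swap⟩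
  refine ⟨R ∪ Bout ∪ Bin.image Prod.swap, ?_, ?_, fun u v => ?_⟩
  · simp only [mem_union, mem_image]
    rintro e ((he | he) | ⟨e, he, rfl⟩)
    exacts [hRD e he, hBoutD e he, hBinD e he]
  · have := card_union_le (R ∪ Bout) (Bin.image Prod.swap)
    have := card_union_le R Bout
    have := card_image_le (s := Bin) (f := Prod.swap)
    omega
  · obtain ⟨x, hx, hux⟩ := hBin u
    obtain ⟨y, hy, hyv⟩ := hBout v
    have hin : ReflTransGen (fun a b => (a, b) ∈ R ∪ Bout ∪ Bin.image Prod.swap) u x :=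
      ReflTransGen.mono (fun a b h => mem_union_right _ (mem_image_of_mem Prod.swap h)) _ _ hux.swap
    refine (hin.trans (ReflTransGen.mono (fun a b h => ?_) _ _ (hR x hx y hy))).trans
      (ReflTransGen.mono (fun a b h => ?_) _ _ hyv)
    · exact mem_union_left _ (mem_union_left _ h)
    · exact mem_union_left _ (mem_union_right _ h)

theorem IsMinStrong.arcCount_le_of_core {D : Dgraph V} (hD : D.IsMinStrong) {X : Finset V}
    (hX : X.Nonempty) {R : Finset (V × V)} (hRD : ∀ e ∈ R, D.Arc e.1 e.2)
    (hR : ∀ x ∈ X, ∀ y ∈ X, ReflTransGen (fun a b => (a, b) ∈ R) x y) :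
    D.arcCount ≤ #R + 2 * #Xᶜ := by
  obtain ⟨T, hTD, hTcard, hT⟩ := hD.1.exists_spanning_of_core hX hRD hR
  exact (arcCount_le_card fun e he => hD.arc_mem hTD hT he).trans hTcard

end Counting

theorem IsMinStrong.arcCount_le [Fintype V] [Nonempty V] {D : Dgraph V} (hD : D.IsMinStrong) :
    D.arcCount ≤ 2 * (Fintype.card V - 1) := by
  classical
  obtain ⟨r⟩ := ‹Nonempty V›
  have hcore := hD.arcCount_le_of_core (X := {r}) (R := ∅) (singleton_nonempty r) (by simp)
    (by simp [ReflTransGen.refl])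
  simpa [card_compl] using hcore

/-- If the arc `ab` has no reverse, a shortest path from `b` to `a` closes a cycle of length
`m + 1 ≥ 3`, a core with `m + 1` vertices and `m + 1` arcs. -/
theorem IsMinStrong.arcCount_add_three_le [Fintype V] {D : Dgraph V} (hD : D.IsMinStrong)
    {a b : V} (hab : D.Arc a b) (hba : ¬ D.Arc b a) : D.arcCount + 3 ≤ 2 * Fintype.card V := by
  classical
  obtain ⟨m, f, hf0, hfm, hf, hinj⟩ := (hD.1 b a).exists_injOn_walk
  have hm : 2 ≤ m := by
    rcases m with _ | _ | m
    · exact absurd (hf0.symm.trans hfm ▸ hab) (D.loopless a)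
    · exact absurd (by simpa [hf0, hfm] using hf 0 one_pos) hba
    · omega
  set X := (range (m + 1)).image f
  set R := insert (a, b) ((range m).image fun i => (f i, f (i + 1)))
  have hXcard : #X = m + 1 := by
    rw [card_image_of_injOn, card_range]
    intro i hi j hj
    exact hinj (by simpa [Nat.lt_succ_iff] using hi) (by simpa [Nat.lt_succ_iff] using hj)
  have hRcard : #R ≤ m + 1 :=
    (card_insert_le _ _).trans (by simpa using card_image_le (s := range m))
  have hRD : ∀ e ∈ R, D.Arc e.1 e.2 := by
    simp only [R, mem_insert, mem_image, mem_range]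
    rintro e (rfl | ⟨i, hi, rfl⟩)
    exacts [hab, hf i hi]
  have hpath : ∀ i j, i ≤ j → j ≤ m → ReflTransGen (fun x y => (x, y) ∈ R) (f i) (f j) :=
    fun i j hij hjm => ReflTransGen.lift f (fun _ _ h => h) _ _ <|
      reflTransGen_of_succ_of_le (fun s t => (f s, f t) ∈ R) (fun t ht => by
        rw [Order.succ_eq_add_one]
        exact mem_insert_of_mem (mem_image_of_mem _ (mem_range.2 (by simp at ht; omega)))) hij
  have hR : ∀ x ∈ X, ∀ y ∈ X, ReflTransGen (fun x y => (x, y) ∈ R) x y := by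
    simp only [X, mem_image, mem_range]
    rintro _ ⟨i, hi, rfl⟩ _ ⟨j, hj, rfl⟩
    have hcycle : (f m, f 0) ∈ R := by simp [R, hf0, hfm]
    exact ((hpath i m (by omega) le_rfl).tail hcycle).trans (hpath 0 j (by omega) (by omega))
  have hcore : D.arcCount ≤ #R + 2 * #Xᶜ :=
    hD.arcCount_le_of_core ⟨f 0, mem_image_of_mem f (by simp)⟩ hRD hR
  have hXV : #X ≤ Fintype.card V := card_le_univ X
  rw [card_compl] at hcore
  omega

theorem IsMinStrong.isSymmetric [Fintype V] {D : Dgraph V} (hD : D.IsMinStrong)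
    (h : 2 * (Fintype.card V - 1) ≤ D.arcCount) : D.IsSymmetric := by
  intro a b hab
  by_contra hba
  have hlt := hD.arcCount_add_three_le hab hba
  have hpos : 0 < Fintype.card V := Fintype.card_pos_iff.2 ⟨a⟩
  omega


def ofSimpleGraph (G : SimpleGraph V) : Dgraph V := ⟨G.Adj, fun _ => G.irrefl⟩

theorem isSymmetric_ofSimpleGraph (G : SimpleGraph V) : (ofSimpleGraph G).IsSymmetric :=
  fun _ _ h => h.symm

theorem underlying_ofSimpleGraph (G : SimpleGraph V) : (ofSimpleGraph G).underlying = G := by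
  ext u v
  exact or_iff_left_of_imp fun h => h.symm

theorem IsSymmetric.underlying_adj {D : Dgraph V} (hsym : D.IsSymmetric) :
    D.underlying.Adj = D.Arc := by
  ext u v
  exact or_iff_left_of_imp (hsym v u)

theorem IsSymmetric.isStrong_iff_preconnected {D : Dgraph V} (hsym : D.IsSymmetric) :
    D.IsStrong ↔ D.underlying.Preconnected := by
  simp only [IsStrong, SimpleGraph.Preconnected, SimpleGraph.reachable_iff_reflTransGen,
    hsym.underlying_adj]

theorem IsStrong.deleteArc_of_reflTransGen {D : Dgraph V} (hD : D.IsStrong) {e : V × V}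
    (he : ReflTransGen (D.deleteArc e).Arc e.1 e.2) : (D.deleteArc e).IsStrong := by
  refine fun u v => ReflTransGen.lift' id (fun x y hxy => ?_) _ _ (hD u v)
  by_cases hxye : (x, y) = e
  · subst hxye
    exact he
  · exact .single ⟨hxy, hxye⟩

theorem IsSymmetric.isStrong_deleteArc_iff {D : Dgraph V} (hsym : D.IsSymmetric)
    (hD : D.IsStrong) (a b : V) :
    (D.deleteArc (a, b)).IsStrong ↔ ¬ D.underlying.IsBridge s(a, b) := by
  rw [SimpleGraph.isBridge_iff, not_not, SimpleGraph.reachable_iff_reflTransGen]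
  constructor
  · intro h
    -- along a path from `a`, the only step that is not an edge of the graph minus `ab` is `ba`,
    -- which leads back to `a`
    have key : ∀ y, ReflTransGen (D.deleteArc (a, b)).Arc a y →
        ReflTransGen (D.underlying.deleteEdges {s(a, b)}).Adj a y := by
      intro y hy
      induction hy with
      | refl => exact .refl
      | @tail x y _ hxy ih =>
        by_cases hyx : (x, y) = (b, a)
        · obtain ⟨-, rfl⟩ := Prod.ext_iff.1 hyx
          exact .refl
        · refine ih.tail (SimpleGraph.deleteEdges_adj.2 ⟨Or.inl hxy.1, ?_⟩)
          simp only [Set.mem_singleton_iff, Sym2.eq_iff, not_or]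
          exact ⟨fun h => hxy.2 (Prod.ext h.1 h.2), fun h => hyx (Prod.ext h.1 h.2)⟩
    exact key b (h a b)
  · intro h
    refine hD.deleteArc_of_reflTransGen (ReflTransGen.mono (fun x y hxy => ?_) _ _ h)
    rw [SimpleGraph.deleteEdges_adj, hsym.underlying_adj] at hxy
    refine ⟨hxy.1, fun hab => hxy.2 ?_⟩
    obtain ⟨rfl, rfl⟩ := Prod.ext_iff.1 hab
    rfl

theorem IsSymmetric.isMinStrong_iff_isTree [Nonempty V] {D : Dgraph V} (hsym : D.IsSymmetric) :
    D.IsMinStrong ↔ D.underlying.IsTree := by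
  rw [IsMinStrong, SimpleGraph.isTree_iff, SimpleGraph.connected_iff,
    ← hsym.isStrong_iff_preconnected, SimpleGraph.isAcyclic_iff_forall_adj_isBridge,
    and_iff_left ‹Nonempty V›]
  refine and_congr_right fun hD => ?_
  simp only [Prod.forall, hsym.isStrong_deleteArc_iff hD, not_not, hsym.underlying_adj]

theorem IsSymmetric.arcCount_eq_of_isTree [Fintype V] {D : Dgraph V} (hsym : D.IsSymmetric)
    (htree : D.underlying.IsTree) : D.arcCount = 2 * (Fintype.card V - 1) := by
  classical
  have hdart : D.arcCount = Fintype.card D.underlying.Dart := by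
    rw [arcCount, ← Nat.card_eq_fintype_card]
    exact Nat.card_congr ⟨fun p => ⟨p.1, Or.inl p.2⟩,
      fun d => ⟨d.toProd, hsym.underlying_adj ▸ d.adj⟩, fun _ => rfl, fun _ => rfl⟩
  have hedges := htree.card_edgeFinset
  rw [hdart, D.underlying.dart_card_eq_twice_card_edges]
  omega

theorem kappaS_pos_iff [Finite V] (D : Dgraph V) {S : Set V} {a b : V} (ha : a ∈ S)
    (hb : b ∈ S) (hab : a ≠ b) : 0 < D.kappaS S ↔ ∃ H : StrongSub D, S ⊆ H.verts := by
  rw [kappaS]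
  constructor
  · intro h
    obtain ⟨p, ⟨f, hfS, -, -⟩, hp⟩ := exists_lt_of_lt_csSup
      (by exact ⟨0, Fin.elim0, fun i => i.elim0, fun i => i.elim0, fun i => i.elim0⟩) h
    exact ⟨f ⟨0, hp⟩, hfS _⟩
  · rintro ⟨H, hH⟩
    refine zero_lt_one.trans_le
      (le_csSup ⟨Nat.card (V × V), ?_⟩ ⟨fun _ => H, fun _ => hH, ?_, ?_⟩)
    · -- each member of a family contains an arc leaving `a`, and these arcs are distinct
      rintro p ⟨f, hfS, -, hdisj⟩
      have hout : ∀ i, ∃ e : V × V, (f i).Arc e.1 e.2 := fun i =>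
        match ((f i).strong a (hfS i ha) b (hfS i hb)).cases_head with
        | .inl h => absurd h hab
        | .inr ⟨c, hc, _⟩ => ⟨(a, c), hc⟩
      choose g hg using hout
      simpa using Nat.card_le_card_of_injective g fun i j hij => by
        by_contra hne
        exact hdisj i j hne _ _ ⟨hg i, hij ▸ hg j⟩
    all_goals exact fun i j hij => absurd (Subsingleton.elim i j) hij

theorem kappa_pos_iff_isStrong [Fintype V] {k : ℕ} (hk : 2 ≤ k) (hkV : k ≤ Fintype.card V)
    (D : Dgraph V) : 0 < D.kappa k ↔ D.IsStrong := by
  classical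
  have hne : {m | ∃ S : Finset V, #S = k ∧ D.kappaS S = m}.Nonempty := by
    obtain ⟨S, -, hS⟩ := exists_superset_card_eq (s := ∅) (by simp) hkV
    exact ⟨_, S, hS, rfl⟩
  rw [kappa, Nat.pos_iff_ne_zero, Ne, Nat.sInf_eq_zero, or_iff_left hne.ne_empty]
  simp only [Set.mem_ofPred_eq, not_exists, not_and, ← Nat.pos_iff_ne_zero]
  constructor
  · intro h u v
    rcases eq_or_ne u v with rfl | huv
    · exact .refl
    obtain ⟨S, hsub, hS⟩ :=
      exists_superset_card_eq (s := {u, v}) (by rwa [card_pair huv]) hkV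
    have hu : u ∈ (S : Set V) := hsub (mem_insert_self u {v})
    have hv : v ∈ (S : Set V) := hsub (mem_insert_of_mem (mem_singleton_self v))
    obtain ⟨H, hH⟩ := (D.kappaS_pos_iff hu hv huv).1 (h S hS)
    exact ReflTransGen.mono H.arc_sub _ _ (H.strong u (hH hu) v (hH hv))
  · intro hD S hS
    obtain ⟨a, ha, b, hb, hab⟩ := one_lt_card.1 (by omega : 1 < #S)
    exact (D.kappaS_pos_iff (S := S) ha hb hab).2
      ⟨⟨Set.univ, D.Arc, fun _ _ h => h, fun _ _ _ => ⟨trivial, trivial⟩, fun u _ v _ => hD u v⟩,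
        Set.subset_univ _⟩

theorem minSSC_one_iff [Fintype V] {k : ℕ} (hk : 2 ≤ k) (hkV : k ≤ Fintype.card V)
    (D : Dgraph V) : D.MinSSC k 1 ↔ D.IsMinStrong := by
  refine and_congr (Order.one_le_iff_pos.trans (kappa_pos_iff_isStrong hk hkV D))
    (forall₂_congr fun e _ => ?_)
  rw [Nat.sub_self, ← not_lt, kappa_pos_iff_isStrong hk hkV]

end Dgraph

/-- For `2 ≤ k ≤ n`, `F(n, k, 1) = 2(n-1)`, and the minimally strong subgraph
`(k,1)`-connected digraphs attaining this maximum are exactly the symmetric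
digraphs whose underlying undirected graphs are trees. -/
theorem stmt19 (n k : ℕ) (hk2 : 2 ≤ k) (hkn : k ≤ n) :
    Dgraph.FMax n k 1 = 2 * (n - 1) ∧
    ∀ D : Dgraph (Fin n),
      (D.MinSSC k 1 ∧ D.arcCount = 2 * (n - 1)) ↔
        (D.IsSymmetric ∧ D.underlying.IsTree) := by
  have hkV : k ≤ Fintype.card (Fin n) := by simpa using hkn
  have : Nonempty (Fin n) := ⟨⟨0, by omega⟩⟩
  have hchar : ∀ D : Dgraph (Fin n), (D.MinSSC k 1 ∧ D.arcCount = 2 * (n - 1)) ↔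
      (D.IsSymmetric ∧ D.underlying.IsTree) := by
    intro D
    rw [Dgraph.minSSC_one_iff hk2 hkV]
    constructor
    · rintro ⟨hD, hcount⟩
      have hsym := hD.isSymmetric (by simp [hcount])
      exact ⟨hsym, hsym.isMinStrong_iff_isTree.1 hD⟩
    · rintro ⟨hsym, htree⟩
      exact ⟨hsym.isMinStrong_iff_isTree.2 htree, by simpa using hsym.arcCount_eq_of_isTree htree⟩
  refine ⟨IsGreatest.csSup_eq ⟨?_, ?_⟩, hchar⟩
  · have hstar := SimpleGraph.isTree_starGraph (⟨0, by omega⟩ : Fin n)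
    rw [← Dgraph.underlying_ofSimpleGraph (SimpleGraph.starGraph _)] at hstar
    exact ⟨_, (hchar _).2 ⟨Dgraph.isSymmetric_ofSimpleGraph _, hstar⟩⟩
  · rintro m ⟨D, hD, rfl⟩
    simpa using ((Dgraph.minSSC_one_iff hk2 hkV D).1 hD).arcCount_le
end
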